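/- arXiv:2512.11599 — 3 statements merged into one kernel-verified Lean document; each statement's English description precedes it below -/
import Mathlib

section
/- Let (Y_{ij})_{(i,j)∈ℕ²} be i.i.d. real-valued random variables with E[Y_{11}] = 0 and Var(Y_{11}) = σ² ∈ (0,∞), and let σ̂² = σ̂²_{n,m} be a weakly consistent estimator of σ². Set Ȳ = Ȳ_{n,m} = (nm)^{−1} Σ_{i=1}^n Σ_{j=1}^m Y_{ij}. Then (1/√2) · [ (l_n l_m √(b_n b_m) / σ̂²) · Ȳ² − 1/√(b_n b_m) ] converges to 0 in probability as n, m → ∞. -/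
open MeasureTheory ProbabilityTheory Filter Finset Topology

noncomputable section

/-- Block side length `l_n = ⌊n^s⌋`. -/
def blkLen (s : ℝ) (n : ℕ) : ℕ := ⌊(n : ℝ) ^ s⌋₊

/-- Number of blocks per dimension `b_n = ⌊n / l_n⌋`. -/
def blkCnt (s : ℝ) (n : ℕ) : ℕ := n / blkLen s n

/-- Mean of the field `Z` over the block with index `(h, k)`,
i.e. over `I_{hk} = {(h-1)l_n+1, …, h l_n} × {(k-1)l_m+1, …, k l_m}`. -/
def blkMean (ln lm h k : ℕ) (Z : ℕ → ℕ → ℝ) : ℝ :=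
  (∑ i ∈ Finset.Ioc ((h - 1) * ln) (h * ln),
      ∑ j ∈ Finset.Ioc ((k - 1) * lm) (k * lm), Z i j) / ((ln : ℝ) * (lm : ℝ))

/-- Convergence in distribution (along the filter `F` on the pair of sample sizes)
of a doubly indexed family of real random variables towards the law `ν`,
expressed via bounded continuous test functions. -/
def TendstoInDistr {Ω : Type*} [MeasurableSpace Ω] (P : Measure Ω)
    (F : Filter (ℕ × ℕ)) (T : ℕ × ℕ → Ω → ℝ) (ν : Measure ℝ) : Prop :=
  ∀ f : BoundedContinuousFunction ℝ ℝ,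
    Tendsto (fun nm : ℕ × ℕ => ∫ ω, f (T nm ω) ∂P) F (𝓝 (∫ x, f x ∂ν))

/-- Convergence in probability (along the filter `F`) of a doubly indexed family of
real random variables towards the constant `c`. -/
def TendstoInProb {Ω : Type*} [MeasurableSpace Ω] (P : Measure Ω)
    (F : Filter (ℕ × ℕ)) (T : ℕ × ℕ → Ω → ℝ) (c : ℝ) : Prop :=
  ∀ ε : ℝ, 0 < ε →
    Tendsto (fun nm : ℕ × ℕ => P {ω | ε ≤ |T nm ω - c|}) F (𝓝 0)

open scoped ENNReal NNReal

lemma tendsto_blkCnt_atTop {s : ℝ} (hs0 : 0 < s) (hs1 : s < 1) :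
    Tendsto (blkCnt s) atTop atTop := by
  rw [tendsto_atTop]
  intro k
  have h := (tendsto_rpow_atTop (y := 1 - s) (by linarith)).comp
    (tendsto_natCast_atTop_atTop (R := ℝ))
  filter_upwards [h.eventually_ge_atTop (k : ℝ), eventually_ge_atTop 1] with n hn hn1
  have hn0 : (0:ℝ) < (n:ℝ) := by exact_mod_cast hn1
  have hl0 : 0 < blkLen s n := by
    rw [blkLen, Nat.floor_pos]
    exact Real.one_le_rpow (by exact_mod_cast hn1) hs0.le
  rw [blkCnt, Nat.le_div_iff_mul_le hl0]
  have h2 : (blkLen s n : ℝ) ≤ (n:ℝ) ^ s := Nat.floor_le (Real.rpow_nonneg hn0.le s)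
  have h3 : ((k * blkLen s n : ℕ) : ℝ) ≤ (n : ℝ) := by
    push_cast
    calc (k:ℝ) * blkLen s n ≤ (n:ℝ) ^ (1-s) * (n:ℝ) ^ s := by
          apply mul_le_mul hn h2 (Nat.cast_nonneg _) (Real.rpow_nonneg hn0.le _)
      _ = (n:ℝ) := by
          rw [← Real.rpow_add hn0]; simp
  exact_mod_cast h3

lemma tendsto_sqrt_atTop : Tendsto Real.sqrt atTop atTop := by
  apply (tendsto_rpow_atTop (y := 1/2) (by norm_num)).congr'
  filter_upwards [eventually_ge_atTop (0:ℝ)] with x hx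
  rw [Real.sqrt_eq_rpow]

/-- `blkCnt s n * blkLen s n ≤ n`. -/
lemma blkCnt_mul_blkLen_le (s : ℝ) (n : ℕ) : blkCnt s n * blkLen s n ≤ n :=
  Nat.div_mul_le_self n (blkLen s n)

set_option maxHeartbeats 2000000
/-- the centering term involving the squared overall mean is
asymptotically negligible (converges to `0` in probability). -/
theorem centering_term_negligible
    {Ω : Type*} [MeasurableSpace Ω] (P : Measure Ω) [IsProbabilityMeasure P]
    (s₁ s₂ : ℝ) (hs₁ : s₁ ∈ Set.Ioo (1/2 : ℝ) 1) (hs₂ : s₂ ∈ Set.Ioo (1/2 : ℝ) 1)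
    (Y : ℕ → ℕ → Ω → ℝ) (hYmeas : ∀ i j, Measurable (Y i j))
    (hYindep : iIndepFun
      (fun p : ℕ × ℕ => Y p.1 p.2) P)
    (hYident : ∀ i j, Measure.map (Y i j) P = Measure.map (Y 1 1) P)
    (hmean : ∫ ω, Y 1 1 ω ∂P = 0)
    (σ : ℝ) (hσ : 0 < σ) (hvar : variance (Y 1 1) P = σ ^ 2)
    (σsq : ℕ × ℕ → Ω → ℝ)
    (hσsq_meas : ∀ nm, Measurable (σsq nm))
    (hσsq_cons : TendstoInProb P (atTop ×ˢ atTop) σsq (σ ^ 2)) :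
    TendstoInProb P (atTop ×ˢ atTop)
      (fun nm ω =>
        (1 / Real.sqrt 2) *
          (((blkLen s₁ nm.1 : ℝ) * (blkLen s₂ nm.2 : ℝ) *
                Real.sqrt ((blkCnt s₁ nm.1 : ℝ) * (blkCnt s₂ nm.2 : ℝ)) / σsq nm ω) *
              ((∑ i ∈ Finset.Icc 1 nm.1, ∑ j ∈ Finset.Icc 1 nm.2, Y i j ω) /
                  ((nm.1 : ℝ) * (nm.2 : ℝ))) ^ 2
            - 1 / Real.sqrt ((blkCnt s₁ nm.1 : ℝ) * (blkCnt s₂ nm.2 : ℝ))))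
      0 := by
  classical
  obtain ⟨hs₁0, hs₁1⟩ := hs₁
  obtain ⟨hs₂0, hs₂1⟩ := hs₂
  intro ε hε
  set F : Filter (ℕ × ℕ) := atTop ×ˢ atTop with hF
  -- ## Probabilistic preliminaries
  have hmem11 : MemLp (Y 1 1) 2 P := by
    by_contra h
    have h2 := evariance_eq_top (hYmeas 1 1).aestronglyMeasurable h
    rw [variance, h2] at hvar
    simp only [ENNReal.toReal_top] at hvar
    nlinarith
  have hmem : ∀ i j, MemLp (Y i j) 2 P := by
    intro i j
    have h1 : MemLp id 2 (Measure.map (Y i j) P) := by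
      rw [hYident i j,
        memLp_map_measure_iff aestronglyMeasurable_id (hYmeas 1 1).aemeasurable]
      exact hmem11
    rwa [memLp_map_measure_iff aestronglyMeasurable_id (hYmeas i j).aemeasurable] at h1
  have hmean' : ∀ i j, ∫ ω, Y i j ω ∂P = 0 := by
    intro i j
    have h1 : ∫ x, x ∂(Measure.map (Y i j) P) = ∫ x, x ∂(Measure.map (Y 1 1) P) := by
      rw [hYident]
    rwa [integral_map (hYmeas i j).aemeasurable measurable_id'.aestronglyMeasurable,
      integral_map (hYmeas 1 1).aemeasurable measurable_id'.aestronglyMeasurable, hmean] at h1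
  have hsqkey : ∀ i j, ∫ ω, (Y i j ω) ^ 2 ∂P = ∫ x, x ^ 2 ∂(Measure.map (Y 1 1) P) := by
    intro i j
    rw [← hYident i j, integral_map (hYmeas i j).aemeasurable
      (measurable_id'.pow_const 2).aestronglyMeasurable]
  have hvar' : ∀ i j, variance (Y i j) P = σ ^ 2 := by
    intro i j
    rw [← hvar, variance_eq_sub (hmem i j), variance_eq_sub hmem11]
    simp only [Pi.pow_apply]
    rw [hmean' i j, hmean, hsqkey i j, hsqkey 1 1]
  -- the sum
  set S : ℕ × ℕ → Ω → ℝ :=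
    fun nm ω => ∑ i ∈ Finset.Icc 1 nm.1, ∑ j ∈ Finset.Icc 1 nm.2, Y i j ω with hS
  have hrepr : ∀ nm : ℕ × ℕ,
      S nm = ∑ p ∈ (Finset.Icc 1 nm.1) ×ˢ (Finset.Icc 1 nm.2), (fun ω => Y p.1 p.2 ω) := by
    intro nm
    funext ω
    simp only [hS, Finset.sum_apply]
    rw [Finset.sum_product]
  have hSmem : ∀ nm, MemLp (S nm) 2 P := by
    intro nm
    rw [hrepr nm]
    exact memLp_finset_sum' _ (fun p _ => hmem p.1 p.2)
  have hSmean : ∀ nm, ∫ ω, S nm ω ∂P = 0 := by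
    intro nm
    rw [hrepr nm]
    have : ∫ ω, (∑ p ∈ (Finset.Icc 1 nm.1) ×ˢ (Finset.Icc 1 nm.2),
        (fun ω' => Y p.1 p.2 ω')) ω ∂P
        = ∑ p ∈ (Finset.Icc 1 nm.1) ×ˢ (Finset.Icc 1 nm.2), ∫ ω, Y p.1 p.2 ω ∂P := by
      simp only [Finset.sum_apply]
      exact integral_finset_sum _ (fun p _ => (hmem p.1 p.2).integrable one_le_two)
    rw [this]
    simp [hmean']
  have hSvar : ∀ nm, variance (S nm) P = (nm.1 : ℝ) * (nm.2 : ℝ) * σ ^ 2 := by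
    intro nm
    rw [hrepr nm, IndepFun.variance_sum (fun p _ => hmem p.1 p.2)
      (fun p _ q _ hpq => hYindep.indepFun hpq)]
    simp only [hvar']
    rw [Finset.sum_const, Finset.card_product, Nat.card_Icc, Nat.card_Icc]
    push_cast
    ring
  -- ## Deterministic asymptotics
  have hb₁ : Tendsto (fun nm : ℕ × ℕ => blkCnt s₁ nm.1) F atTop :=
    (tendsto_blkCnt_atTop (by linarith) hs₁1).comp tendsto_fst
  have hb₂ : Tendsto (fun nm : ℕ × ℕ => blkCnt s₂ nm.2) F atTop :=
    (tendsto_blkCnt_atTop (by linarith) hs₂1).comp tendsto_snd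
  have hBqT : Tendsto (fun nm : ℕ × ℕ => (blkCnt s₁ nm.1 : ℝ) * (blkCnt s₂ nm.2 : ℝ)) F atTop :=
    ((tendsto_natCast_atTop_atTop (R := ℝ)).comp hb₁).atTop_mul_atTop₀
      ((tendsto_natCast_atTop_atTop (R := ℝ)).comp hb₂)
  have hsq : Tendsto
      (fun nm : ℕ × ℕ => Real.sqrt ((blkCnt s₁ nm.1 : ℝ) * (blkCnt s₂ nm.2 : ℝ))) F atTop :=
    tendsto_sqrt_atTop.comp hBqT
  have hs2pos : (0:ℝ) < Real.sqrt 2 := Real.sqrt_pos.mpr two_pos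
  -- ## the dominating sequence
  set u : ℕ × ℕ → ℝ≥0∞ := fun nm =>
    P {ω | σ ^ 2 / 2 ≤ |σsq nm ω - σ ^ 2|}
      + ENNReal.ofReal (4 / (ε * Real.sqrt 2 *
          Real.sqrt ((blkCnt s₁ nm.1 : ℝ) * (blkCnt s₂ nm.2 : ℝ)))) with hu
  have hu0 : Tendsto u F (𝓝 0) := by
    have h1 := hσsq_cons (σ ^ 2 / 2) (by positivity)
    have h2 : Tendsto (fun nm : ℕ × ℕ => (4 : ℝ) / (ε * Real.sqrt 2 *
        Real.sqrt ((blkCnt s₁ nm.1 : ℝ) * (blkCnt s₂ nm.2 : ℝ)))) F (𝓝 0) :=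
      Tendsto.div_atTop tendsto_const_nhds (hsq.const_mul_atTop (by positivity))
    have h2' : Tendsto (fun nm : ℕ × ℕ => ENNReal.ofReal (4 / (ε * Real.sqrt 2 *
        Real.sqrt ((blkCnt s₁ nm.1 : ℝ) * (blkCnt s₂ nm.2 : ℝ))))) F (𝓝 0) := by
      rw [show (0 : ℝ≥0∞) = ENNReal.ofReal 0 by simp]
      exact ENNReal.tendsto_ofReal h2
    simpa only [add_zero] using h1.add h2'
  -- ## squeeze
  refine tendsto_of_tendsto_of_tendsto_of_le_of_le' tendsto_const_nhds hu0
    (Eventually.of_forall fun nm => zero_le) ?_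
  have hev₁ : ∀ᶠ n in (atTop : Filter ℕ), 1 ≤ n ∧ 1 ≤ blkCnt s₁ n :=
    (eventually_ge_atTop 1).and
      ((tendsto_blkCnt_atTop (by linarith) hs₁1).eventually_ge_atTop 1)
  have hev₂ : ∀ᶠ n in (atTop : Filter ℕ), 1 ≤ n ∧ 1 ≤ blkCnt s₂ n :=
    (eventually_ge_atTop 1).and
      ((tendsto_blkCnt_atTop (by linarith) hs₂1).eventually_ge_atTop 1)
  filter_upwards [tendsto_fst.eventually hev₁, tendsto_snd.eventually hev₂,
      hsq.eventually_ge_atTop (2 / (ε * Real.sqrt 2))] with nm h1 h2 h3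
  obtain ⟨hn1, hbc1⟩ := h1
  obtain ⟨hm1, hbc2⟩ := h2
  simp only [hu]
  -- local abbreviations
  set N : ℝ := (nm.1 : ℝ) * (nm.2 : ℝ) with hN
  set L : ℝ := (blkLen s₁ nm.1 : ℝ) * (blkLen s₂ nm.2 : ℝ) with hLd
  set B : ℝ := (blkCnt s₁ nm.1 : ℝ) * (blkCnt s₂ nm.2 : ℝ) with hBd
  -- positivity facts
  have hl1 : 0 < blkLen s₁ nm.1 := by
    rcases Nat.eq_zero_or_pos (blkLen s₁ nm.1) with h | h
    · simp [blkCnt, h] at hbc1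
    · exact h
  have hl2 : 0 < blkLen s₂ nm.2 := by
    rcases Nat.eq_zero_or_pos (blkLen s₂ nm.2) with h | h
    · simp [blkCnt, h] at hbc2
    · exact h
  have hLpos : 0 < L := by
    have c1 : (0:ℝ) < (blkLen s₁ nm.1 : ℝ) := by exact_mod_cast hl1
    have c2 : (0:ℝ) < (blkLen s₂ nm.2 : ℝ) := by exact_mod_cast hl2
    rw [hLd]; exact mul_pos c1 c2
  have hB1 : (1:ℝ) ≤ B := by
    have c1 : (1:ℝ) ≤ (blkCnt s₁ nm.1 : ℝ) := by exact_mod_cast hbc1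
    have c2 : (1:ℝ) ≤ (blkCnt s₂ nm.2 : ℝ) := by exact_mod_cast hbc2
    rw [hBd]; nlinarith
  have hBpos : (0:ℝ) < B := lt_of_lt_of_le one_pos hB1
  have hsqBpos : 0 < Real.sqrt B := Real.sqrt_pos.mpr hBpos
  have hNpos : (0:ℝ) < N := by
    have c1 : (1:ℝ) ≤ (nm.1 : ℝ) := by exact_mod_cast hn1
    have c2 : (1:ℝ) ≤ (nm.2 : ℝ) := by exact_mod_cast hm1
    rw [hN]; nlinarith
  have hLB : L * B ≤ N := by
    have k1 : (blkCnt s₁ nm.1 : ℝ) * (blkLen s₁ nm.1 : ℝ) ≤ (nm.1 : ℝ) := by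
      exact_mod_cast blkCnt_mul_blkLen_le s₁ nm.1
    have k2 : (blkCnt s₂ nm.2 : ℝ) * (blkLen s₂ nm.2 : ℝ) ≤ (nm.2 : ℝ) := by
      exact_mod_cast blkCnt_mul_blkLen_le s₂ nm.2
    rw [hLd, hBd, hN]
    have k3 := mul_le_mul k1 k2 (mul_nonneg (Nat.cast_nonneg _) (Nat.cast_nonneg _))
      (Nat.cast_nonneg _)
    nlinarith [k3]
  have hBsq : Real.sqrt B * Real.sqrt B = B := Real.mul_self_sqrt hBpos.le
  -- the Chebyshev threshold
  set carg : ℝ := ε * σ ^ 2 * Real.sqrt 2 * N ^ 2 / (4 * L * Real.sqrt B) with hcarg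
  have hcargpos : 0 < carg := by
    rw [hcarg]
    exact div_pos (mul_pos (by positivity) (pow_pos hNpos 2))
      (mul_pos (mul_pos four_pos hLpos) hsqBpos)
  set c : ℝ := Real.sqrt carg with hc
  have hcpos : 0 < c := Real.sqrt_pos.mpr hcargpos
  have hc2 : c ^ 2 = carg := Real.sq_sqrt hcargpos.le
  -- Chebyshev bound
  have hcheb := meas_ge_le_variance_div_sq (μ := P) (hSmem nm) hcpos
  rw [hSmean nm] at hcheb
  have hvc : variance (S nm) P / c ^ 2 ≤ 4 / (ε * Real.sqrt 2 * Real.sqrt B) := by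
    have hden1 : (0:ℝ) < ε * σ ^ 2 * Real.sqrt 2 * N ^ 2 :=
      mul_pos (by positivity) (pow_pos hNpos 2)
    have hden2 : (0:ℝ) < ε * Real.sqrt 2 * Real.sqrt B :=
      mul_pos (mul_pos hε hs2pos) hsqBpos
    rw [hSvar nm, ← hN, hc2, hcarg, div_div_eq_mul_div, div_le_div_iff₀ hden1 hden2]
    calc N * σ ^ 2 * (4 * L * Real.sqrt B) * (ε * Real.sqrt 2 * Real.sqrt B)
        = (4 * ε * σ ^ 2 * Real.sqrt 2 * N) * (L * (Real.sqrt B * Real.sqrt B)) := by ring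
      _ = (4 * ε * σ ^ 2 * Real.sqrt 2 * N) * (L * B) := by rw [hBsq]
      _ ≤ (4 * ε * σ ^ 2 * Real.sqrt 2 * N) * N := by
          exact mul_le_mul_of_nonneg_left hLB (mul_nonneg (by positivity) hNpos.le)
      _ = 4 * (ε * σ ^ 2 * Real.sqrt 2 * N ^ 2) := by ring
  have hbound2 : P {ω | c ≤ |S nm ω - 0|} ≤
      ENNReal.ofReal (4 / (ε * Real.sqrt 2 * Real.sqrt B)) :=
    le_trans hcheb (ENNReal.ofReal_le_ofReal hvc)
  -- the inclusion of events
  have hincl : {ω : Ω | ε ≤ |(1 / Real.sqrt 2) *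
        ((L * Real.sqrt B / σsq nm ω) *
          ((∑ i ∈ Finset.Icc 1 nm.1, ∑ j ∈ Finset.Icc 1 nm.2, Y i j ω) / N) ^ 2
          - 1 / Real.sqrt B) - 0|}
      ⊆ {ω | σ ^ 2 / 2 ≤ |σsq nm ω - σ ^ 2|} ∪ {ω | c ≤ |S nm ω - 0|} := by
    intro ω hω
    simp only [Set.mem_setOf_eq, sub_zero] at hω
    by_contra hcon
    simp only [Set.mem_union, Set.mem_setOf_eq, not_or, not_le, sub_zero] at hcon
    obtain ⟨hc1, hc2⟩ := hcon
    set x := σsq nm ω with hx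
    have hxpos : σ ^ 2 / 2 < x := by
      rcases abs_lt.mp hc1 with ⟨ha, hb⟩
      linarith
    have hx0 : 0 < x := lt_trans (by positivity) hxpos
    set sω := ∑ i ∈ Finset.Icc 1 nm.1, ∑ j ∈ Finset.Icc 1 nm.2, Y i j ω with hsω
    have hSeq : S nm ω = sω := rfl
    rw [hSeq] at hc2
    have hs2lt : sω ^ 2 < carg := by
      have h := mul_self_lt_mul_self (abs_nonneg sω) hc2
      rw [abs_mul_abs_self] at h
      nlinarith [hc2, h]
    have hy2 : (sω / N) ^ 2 < ε * σ ^ 2 * Real.sqrt 2 / (4 * L * Real.sqrt B) := by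
      rw [div_pow]
      have h4 : (0:ℝ) < 4 * L * Real.sqrt B := mul_pos (mul_pos four_pos hLpos) hsqBpos
      have key : sω ^ 2 * (4 * L * Real.sqrt B) < ε * σ ^ 2 * Real.sqrt 2 * N ^ 2 := by
        rw [hcarg] at hs2lt
        exact (lt_div_iff₀ h4).mp hs2lt
      rw [div_lt_div_iff₀ (pow_pos hNpos 2) h4]
      linarith [key]
    have hApos : 0 ≤ L * Real.sqrt B / x * (sω / N) ^ 2 :=
      mul_nonneg (div_nonneg (mul_nonneg hLpos.le (Real.sqrt_nonneg _)) hx0.le) (sq_nonneg _)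
    have hAle : L * Real.sqrt B / x * (sω / N) ^ 2 ≤ ε * Real.sqrt 2 / 2 := by
      rw [div_mul_eq_mul_div, div_le_iff₀ hx0]
      have k1 : L * Real.sqrt B * (sω / N) ^ 2
          < L * Real.sqrt B * (ε * σ ^ 2 * Real.sqrt 2 / (4 * L * Real.sqrt B)) :=
        mul_lt_mul_of_pos_left hy2 (mul_pos hLpos hsqBpos)
      have k2 : L * Real.sqrt B * (ε * σ ^ 2 * Real.sqrt 2 / (4 * L * Real.sqrt B))
          = ε * σ ^ 2 * Real.sqrt 2 / 4 := by
        field_simp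
      have k3 : (0:ℝ) < ε * Real.sqrt 2 / 2 := by positivity
      have k5 := mul_lt_mul_of_pos_left hxpos k3
      have k4 : ε * Real.sqrt 2 / 2 * (σ ^ 2 / 2) = ε * σ ^ 2 * Real.sqrt 2 / 4 := by ring
      linarith [k1, k2, k4, k5]
    have hBle : 1 / Real.sqrt B ≤ ε * Real.sqrt 2 / 2 := by
      rw [div_le_iff₀ hsqBpos]
      rw [div_le_iff₀ (by positivity : (0:ℝ) < ε * Real.sqrt 2)] at h3
      linarith [h3]
    have hBnn : (0:ℝ) ≤ 1 / Real.sqrt B := by positivity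
    have habs : |L * Real.sqrt B / x * (sω / N) ^ 2 - 1 / Real.sqrt B|
        ≤ ε * Real.sqrt 2 / 2 := by
      rw [abs_sub_le_iff]
      constructor <;> linarith
    have hhalf : 1 / Real.sqrt 2 * (ε * Real.sqrt 2 / 2) = ε / 2 := by
      field_simp
    have hfin : |1 / Real.sqrt 2 *
        (L * Real.sqrt B / x * (sω / N) ^ 2 - 1 / Real.sqrt B)| < ε := by
      rw [abs_mul, abs_of_nonneg (by positivity : (0:ℝ) ≤ 1 / Real.sqrt 2)]
      calc 1 / Real.sqrt 2 * |L * Real.sqrt B / x * (sω / N) ^ 2 - 1 / Real.sqrt B|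
          ≤ 1 / Real.sqrt 2 * (ε * Real.sqrt 2 / 2) :=
            mul_le_mul_of_nonneg_left habs (by positivity)
        _ = ε / 2 := hhalf
        _ < ε := by linarith
    linarith [hω, hfin]
  refine le_trans (measure_mono hincl) ?_
  refine le_trans (measure_union_le _ _) ?_
  exact add_le_add_right hbound2 _
end
end

section
/- Let μ : [0,1]² → ℝ satisfy Assumption 1. For each n, m define the deterministic block averages μ̄_{hk} = (l_n l_m)^{−1} Σ_{(i,j)∈I_{hk}} μ(i/n, j/m), their overall average μ̄ = (b_n b_m)^{−1} Σ_{h,k} μ̄_{hk}, the block representatives μ(h/b_n, k/b_m), and their average μ̄_· = (b_n b_m)^{−1} Σ_{h,k} μ(h/b_n, k/b_m). Then | (b_n b_m)^{−1} Σ_{h=1}^{b_n} Σ_{k=1}^{b_m} [ (μ̄_{hk} − μ̄)² − (μ(h/b_n, k/b_m) − μ̄_·)² ] | → 0 as n, m → ∞. -/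
open MeasureTheory ProbabilityTheory Filter Finset Topology

noncomputable section

/-- Assumption 1: `μ = μ' + Σᵢ cᵢ 1_{Cᵢ}` with `μ'` continuous on the unit square and
`C₁, …, C_s` finitely many disjoint Borel subsets of the unit square whose topological
boundaries are Lebesgue-null; the complement of their union is nonempty. -/
def Assumption1 (μ : ℝ → ℝ → ℝ) : Prop :=
  ∃ (s : ℕ) (μ' : ℝ → ℝ → ℝ) (c : Fin s → ℝ) (C : Fin s → Set (ℝ × ℝ)),
    ContinuousOn (fun p : ℝ × ℝ => μ' p.1 p.2) (Set.Icc 0 1 ×ˢ Set.Icc 0 1) ∧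
    (∀ i, MeasurableSet (C i)) ∧
    (∀ i, C i ⊆ Set.Icc 0 1 ×ˢ Set.Icc 0 1) ∧
    (Pairwise fun i j => Disjoint (C i) (C j)) ∧
    (∀ i, volume (frontier (C i)) = 0) ∧
    (((Set.Icc 0 1 ×ˢ Set.Icc 0 1 : Set (ℝ × ℝ)) \ ⋃ i, C i).Nonempty) ∧
    (∀ x y, μ x y = μ' x y + ∑ i, c i * Set.indicator (C i) (fun _ => (1 : ℝ)) (x, y))

/-- The filter of sample sizes tending to infinity through values for which the blocks
tile the grid exactly (`n = b_n l_n` and `m = b_m l_m`). -/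
def tileFilter (s₁ s₂ : ℝ) : Filter (ℕ × ℕ) :=
  (atTop ⊓ Filter.principal {n : ℕ | blkCnt s₁ n * blkLen s₁ n = n}) ×ˢ
    (atTop ⊓ Filter.principal {m : ℕ | blkCnt s₂ m * blkLen s₂ m = m})

/-- Deterministic block average `μ̄_{hk}` of the location function. -/
def muBlk (s₁ s₂ : ℝ) (μ : ℝ → ℝ → ℝ) (nm : ℕ × ℕ) (h k : ℕ) : ℝ :=
  blkMean (blkLen s₁ nm.1) (blkLen s₂ nm.2) h k
    (fun i j => μ ((i : ℝ) / (nm.1 : ℝ)) ((j : ℝ) / (nm.2 : ℝ)))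

/-- Overall average `μ̄` of the deterministic block averages. -/
def muBlkAvg (s₁ s₂ : ℝ) (μ : ℝ → ℝ → ℝ) (nm : ℕ × ℕ) : ℝ :=
  (1 / ((blkCnt s₁ nm.1 : ℝ) * (blkCnt s₂ nm.2 : ℝ))) *
    ∑ h ∈ Finset.Icc 1 (blkCnt s₁ nm.1), ∑ k ∈ Finset.Icc 1 (blkCnt s₂ nm.2),
      muBlk s₁ s₂ μ nm h k

/-- Block representative `μ(h/b_n, k/b_m)`. -/
def muRep (s₁ s₂ : ℝ) (μ : ℝ → ℝ → ℝ) (nm : ℕ × ℕ) (h k : ℕ) : ℝ :=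
  μ ((h : ℝ) / (blkCnt s₁ nm.1 : ℝ)) ((k : ℝ) / (blkCnt s₂ nm.2 : ℝ))

/-- Average `μ̄_·` of the block representatives. -/
def muRepAvg (s₁ s₂ : ℝ) (μ : ℝ → ℝ → ℝ) (nm : ℕ × ℕ) : ℝ :=
  (1 / ((blkCnt s₁ nm.1 : ℝ) * (blkCnt s₂ nm.2 : ℝ))) *
    ∑ h ∈ Finset.Icc 1 (blkCnt s₁ nm.1), ∑ k ∈ Finset.Icc 1 (blkCnt s₂ nm.2),
      muRep s₁ s₂ μ nm h k

set_option maxHeartbeats 1000000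

/-! ### Auxiliary lemmas -/

lemma indicator_eq_of_notMem_cthickening' {E : Type*} [NormedAddCommGroup E] [NormedSpace ℝ E]
    (C : Set E) {δ : ℝ} (hδ : 0 < δ) {p q : E} (hpq : dist p q ≤ δ)
    (hp : p ∉ Metric.cthickening δ (frontier C)) :
    C.indicator (fun _ => (1:ℝ)) p = C.indicator (fun _ => (1:ℝ)) q := by
  rw [Metric.mem_cthickening_iff, not_le] at hp
  obtain ⟨r, hr1, hr2⟩ : ∃ r : ℝ, δ < r ∧ Metric.ball p r ∩ frontier C = ∅ := by
    rcases eq_top_or_lt_top (Metric.infEDist p (frontier C)) with h | h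
    · refine ⟨δ + 1, by linarith, ?_⟩
      ext x
      simp only [Set.mem_inter_iff, Metric.mem_ball, Set.mem_empty_iff_false, iff_false, not_and]
      intro hx hxf
      have := EMetric.infEdist_le_edist_of_mem (x := p) hxf
      rw [h] at this
      simp [edist_dist] at this
    · set r' := (Metric.infEDist p (frontier C)).toReal with hr'
      have hδr' : δ < r' := by
        have h2 := hp
        rw [← ENNReal.ofReal_toReal h.ne] at h2
        exact_mod_cast (ENNReal.ofReal_lt_ofReal_iff_of_nonneg hδ.le).mp h2
      refine ⟨r', hδr', ?_⟩
      ext x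
      simp only [Set.mem_inter_iff, Metric.mem_ball, Set.mem_empty_iff_false, iff_false, not_and]
      intro hx hxf
      have h1 := EMetric.infEdist_le_edist_of_mem (x := p) hxf
      have : r' ≤ dist p x := by
        rw [hr', ← ENNReal.toReal_ofReal (dist_nonneg (x := p) (y := x))]
        refine ENNReal.toReal_mono (by simp) ?_
        exact h1.trans_eq (by rw [edist_dist, dist_comm])
      rw [dist_comm] at hx; linarith
  have hqball : q ∈ Metric.ball p r := by rw [Metric.mem_ball, dist_comm]; linarith
  have hpball : p ∈ Metric.ball p r := Metric.mem_ball_self (by linarith)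
  have hsub : Metric.ball p r ⊆ interior C ∪ (closure C)ᶜ := by
    intro x hx
    rcases em (x ∈ interior C) with h1 | h1
    · exact Or.inl h1
    · refine Or.inr fun hxc => ?_
      have hmem : x ∈ Metric.ball p r ∩ frontier C := ⟨hx, hxc, h1⟩
      rw [hr2] at hmem; exact hmem
  have hdisj : Disjoint (interior C) (closure C)ᶜ :=
    (disjoint_compl_right (a := closure C)).mono_left interior_subset_closure
  rcases ((convex_ball p r).isPreconnected).subset_or_subset isOpen_interior
      isClosed_closure.isOpen_compl hdisj hsub with h | h
  · have hpC : p ∈ C := interior_subset (h hpball)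
    have hqC : q ∈ C := interior_subset (h hqball)
    simp [hpC, hqC]
  · have hpC : p ∉ C := fun hc => (h hpball) (subset_closure hc)
    have hqC : q ∉ C := fun hc => (h hqball) (subset_closure hc)
    simp [hpC, hqC]

lemma grid_count_le' (b₁ b₂ : ℕ) (hb₁ : 0 < b₁) (hb₂ : 0 < b₂) (S : Set (ℝ × ℝ))
    (r V : ℝ) (hV0 : 0 ≤ V)
    (hr₁ : 1 / (b₁ : ℝ) ≤ r) (hr₂ : 1 / (b₂ : ℝ) ≤ r)
    (hV : volume (Metric.cthickening r S) ≤ ENNReal.ofReal V) :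
    (∑ h ∈ Finset.Icc 1 b₁, ∑ k ∈ Finset.Icc 1 b₂,
      S.indicator (fun _ => (1:ℝ)) ((h : ℝ) / b₁, (k : ℝ) / b₂)) ≤ (b₁ * b₂ : ℝ) * V := by
  classical
  have hb₁' : (0:ℝ) < b₁ := by exact_mod_cast hb₁
  have hb₂' : (0:ℝ) < b₂ := by exact_mod_cast hb₂
  set T : Finset (ℕ × ℕ) :=
    (Finset.Icc 1 b₁ ×ˢ Finset.Icc 1 b₂).filter
      (fun hk => ((hk.1 : ℝ) / b₁, (hk.2 : ℝ) / b₂) ∈ S) with hT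
  have hsum : (∑ h ∈ Finset.Icc 1 b₁, ∑ k ∈ Finset.Icc 1 b₂,
      S.indicator (fun _ => (1:ℝ)) ((h : ℝ) / b₁, (k : ℝ) / b₂)) = (T.card : ℝ) := by
    simp only [Set.indicator_apply]
    rw [hT, ← Finset.sum_product', Finset.sum_boole]
  rw [hsum]
  set Box : ℕ × ℕ → Set (ℝ × ℝ) := fun hk =>
    (Set.Ioo (((hk.1 : ℝ) - 1) / b₁) ((hk.1 : ℝ) / b₁)) ×ˢ
      (Set.Ioo (((hk.2 : ℝ) - 1) / b₂) ((hk.2 : ℝ) / b₂)) with hBox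
  have hBoxVol : ∀ hk : ℕ × ℕ,
      volume (Box hk) = ENNReal.ofReal (1 / b₁) * ENNReal.ofReal (1 / b₂) := by
    intro hk
    rw [hBox]
    simp only [Measure.volume_eq_prod]
    rw [Measure.prod_prod, Real.volume_Ioo, Real.volume_Ioo]
    congr 2 <;> field_simp <;> ring
  have hBoxSub : ∀ hk ∈ T, Box hk ⊆ Metric.cthickening r S := by
    rintro ⟨h, k⟩ hhk x hx
    simp only [hT, Finset.mem_filter] at hhk
    simp only [hBox, Set.mem_prod, Set.mem_Ioo] at hx
    obtain ⟨x1, x2⟩ := hx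
    refine Metric.mem_cthickening_of_dist_le x ((h : ℝ) / b₁, (k : ℝ) / b₂) r S hhk.2 ?_
    rw [Prod.dist_eq]
    have e₁ : ((h:ℝ)-1)/b₁ = (h:ℝ)/b₁ - 1/b₁ := by ring
    have e₂ : ((k:ℝ)-1)/b₂ = (k:ℝ)/b₂ - 1/b₂ := by ring
    rw [e₁] at x1; rw [e₂] at x2
    have d1 : dist x.1 ((h:ℝ)/b₁) ≤ r := by
      rw [Real.dist_eq, abs_le]; exact ⟨by linarith [x1.1, hr₁], by linarith [x1.2, hr₁]⟩
    have d2 : dist x.2 ((k:ℝ)/b₂) ≤ r := by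
      rw [Real.dist_eq, abs_le]; exact ⟨by linarith [x2.1, hr₂], by linarith [x2.2, hr₂]⟩
    exact max_le d1 d2
  have hdisj : (T : Set (ℕ × ℕ)).PairwiseDisjoint Box := by
    rintro ⟨h, k⟩ _ ⟨h', k'⟩ _ hne
    have hor : h ≠ h' ∨ k ≠ k' := by
      by_contra hc; push_neg at hc; exact hne (by simp [hc.1, hc.2])
    simp only [Function.onFun]
    rw [Set.disjoint_left]
    rintro x ⟨x1, x2⟩ ⟨y1, y2⟩
    rcases hor with hne' | hne'
    · rcases lt_or_gt_of_ne hne' with hlt | hlt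
      · have hc : (h : ℝ) ≤ (h' : ℝ) - 1 := by
          have : (h:ℝ) + 1 ≤ h' := by exact_mod_cast hlt
          linarith
        have h1 : (h:ℝ)/b₁ ≤ ((h':ℝ)-1)/b₁ := by gcongr
        exact absurd (x1.2.trans_le h1) (not_lt.mpr y1.1.le)
      · have hc : (h' : ℝ) ≤ (h : ℝ) - 1 := by
          have : (h':ℝ) + 1 ≤ h := by exact_mod_cast hlt
          linarith
        have h1 : (h':ℝ)/b₁ ≤ ((h:ℝ)-1)/b₁ := by gcongr
        exact absurd (y1.2.trans_le h1) (not_lt.mpr x1.1.le)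
    · rcases lt_or_gt_of_ne hne' with hlt | hlt
      · have hc : (k : ℝ) ≤ (k' : ℝ) - 1 := by
          have : (k:ℝ) + 1 ≤ k' := by exact_mod_cast hlt
          linarith
        have h1 : (k:ℝ)/b₂ ≤ ((k':ℝ)-1)/b₂ := by gcongr
        exact absurd (x2.2.trans_le h1) (not_lt.mpr y2.1.le)
      · have hc : (k' : ℝ) ≤ (k : ℝ) - 1 := by
          have : (k':ℝ) + 1 ≤ k := by exact_mod_cast hlt
          linarith
        have h1 : (k':ℝ)/b₂ ≤ ((k:ℝ)-1)/b₂ := by gcongr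
        exact absurd (y2.2.trans_le h1) (not_lt.mpr x2.1.le)
  have hmeas : ∀ hk ∈ T, MeasurableSet (Box hk) := fun hk _ =>
    measurableSet_Ioo.prod measurableSet_Ioo
  have key : (T.card : ENNReal) * (ENNReal.ofReal (1 / b₁) * ENNReal.ofReal (1 / b₂))
      ≤ ENNReal.ofReal V := by
    have e1 : (∑ hk ∈ T, volume (Box hk))
        = (T.card : ENNReal) * (ENNReal.ofReal (1 / b₁) * ENNReal.ofReal (1 / b₂)) := by
      rw [Finset.sum_congr rfl (fun hk _ => hBoxVol hk), Finset.sum_const, nsmul_eq_mul]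
    rw [← e1, ← measure_biUnion_finset hdisj hmeas]
    exact le_trans (measure_mono (Set.iUnion₂_subset hBoxSub)) hV
  have key' := ENNReal.toReal_mono (by simp) key
  rw [ENNReal.toReal_mul, ENNReal.toReal_mul, ENNReal.toReal_ofReal hV0,
    ENNReal.toReal_ofReal (by positivity), ENNReal.toReal_ofReal (by positivity),
    ENNReal.toReal_natCast] at key'
  have hfinal : (T.card : ℝ) * (1/b₁ * (1/b₂)) * (b₁ * b₂) ≤ V * (b₁ * b₂) :=
    mul_le_mul_of_nonneg_right key' (by positivity)
  have heq : (T.card : ℝ) * (1/b₁ * (1/b₂)) * (b₁ * b₂) = (T.card : ℝ) := by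
    field_simp
  rw [heq] at hfinal
  nlinarith [hfinal, mul_pos hb₁' hb₂']

lemma blkCnt_tendsto' (s : ℝ) (hs : s ∈ Set.Ioo (1/2:ℝ) 1) :
    Tendsto (fun n => (blkCnt s n : ℝ))
      (atTop ⊓ Filter.principal {n : ℕ | blkCnt s n * blkLen s n = n}) atTop := by
  rw [tendsto_atTop]
  intro B
  rw [eventually_inf_principal]
  have h1 : Tendsto (fun n : ℕ => ((n:ℝ)) ^ (1 - s)) atTop atTop :=
    (tendsto_rpow_atTop (by linarith [hs.2])).comp tendsto_natCast_atTop_atTop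
  filter_upwards [h1.eventually_ge_atTop B, eventually_ge_atTop 1] with n hB hn1 hmem
  have hn1' : (1:ℝ) ≤ (n:ℝ) := by exact_mod_cast hn1
  have hns1 : (1:ℝ) ≤ (n:ℝ) ^ s := Real.one_le_rpow hn1' (by linarith [hs.1])
  have hlle : (blkLen s n : ℝ) ≤ (n:ℝ) ^ s := Nat.floor_le (by positivity)
  have hbl : (blkCnt s n : ℝ) * (blkLen s n : ℝ) = n := by exact_mod_cast hmem
  have hkey : (n:ℝ) ^ (1 - s) ≤ (blkCnt s n : ℝ) := by
    have hb0 : (0:ℝ) ≤ (blkCnt s n : ℝ) := Nat.cast_nonneg _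
    have h2 : (n:ℝ) ^ (1 - s) * (n:ℝ) ^ s = (n:ℝ) := by
      rw [← Real.rpow_add (by linarith), sub_add_cancel, Real.rpow_one]
    have h3 : (n:ℝ) ^ (1-s) * (n:ℝ)^s ≤ (blkCnt s n : ℝ) * (n:ℝ)^s := by
      rw [h2]
      calc (n:ℝ) = (blkCnt s n : ℝ) * (blkLen s n : ℝ) := hbl.symm
        _ ≤ (blkCnt s n : ℝ) * (n:ℝ)^s := mul_le_mul_of_nonneg_left hlle hb0
    have hns0 : (0:ℝ) < (n:ℝ)^s := by linarith
    exact le_of_mul_le_mul_right h3 hns0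
  exact hB.trans hkey

lemma card_Ioc_block (h l : ℕ) (hh : 1 ≤ h) :
    (Finset.Ioc ((h - 1) * l) (h * l)).card = l := by
  obtain ⟨h', rfl⟩ := Nat.exists_eq_add_of_le hh
  rw [Nat.card_Ioc]
  simp [Nat.add_sub_cancel, Nat.succ_mul, Nat.add_mul]


lemma avg_abs_le_avg (b₁ b₂ : ℕ) (f g : ℕ → ℕ → ℝ)
    (hfg : ∀ h ∈ Finset.Icc 1 b₁, ∀ k ∈ Finset.Icc 1 b₂, |f h k| ≤ g h k) :
    |(1 / ((b₁:ℝ) * (b₂:ℝ))) * ∑ h ∈ Finset.Icc 1 b₁, ∑ k ∈ Finset.Icc 1 b₂, f h k|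
      ≤ (1 / ((b₁:ℝ) * (b₂:ℝ))) * ∑ h ∈ Finset.Icc 1 b₁, ∑ k ∈ Finset.Icc 1 b₂, g h k := by
  rw [abs_mul, abs_of_nonneg (by positivity : (0:ℝ) ≤ 1 / ((b₁:ℝ) * (b₂:ℝ)))]
  refine mul_le_mul_of_nonneg_left ?_ (by positivity)
  refine (Finset.abs_sum_le_sum_abs _ _).trans ?_
  refine Finset.sum_le_sum fun h hh => ?_
  refine (Finset.abs_sum_le_sum_abs _ _).trans ?_
  exact Finset.sum_le_sum fun k hk => hfg h hh k hk

lemma blk_abs_le (l₁ l₂ : ℕ) (hl₁ : 0 < l₁) (hl₂ : 0 < l₂) (h k : ℕ) (hh : 1 ≤ h) (hk : 1 ≤ k)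
    (Z : ℕ → ℕ → ℝ) (K : ℝ)
    (hZ : ∀ i ∈ Finset.Ioc ((h-1)*l₁) (h*l₁), ∀ j ∈ Finset.Ioc ((k-1)*l₂) (k*l₂), |Z i j| ≤ K) :
    |blkMean l₁ l₂ h k Z| ≤ K := by
  have hl₁' : (0:ℝ) < l₁ := by exact_mod_cast hl₁
  have hl₂' : (0:ℝ) < l₂ := by exact_mod_cast hl₂
  rw [blkMean, abs_div, abs_of_pos (mul_pos hl₁' hl₂'), div_le_iff₀ (mul_pos hl₁' hl₂')]
  calc |∑ i ∈ Finset.Ioc ((h-1)*l₁) (h*l₁), ∑ j ∈ Finset.Ioc ((k-1)*l₂) (k*l₂), Z i j|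
      ≤ ∑ i ∈ Finset.Ioc ((h-1)*l₁) (h*l₁), ∑ j ∈ Finset.Ioc ((k-1)*l₂) (k*l₂), |Z i j| := by
        refine (Finset.abs_sum_le_sum_abs _ _).trans ?_
        exact Finset.sum_le_sum fun i hi => Finset.abs_sum_le_sum_abs _ _
    _ ≤ ∑ i ∈ Finset.Ioc ((h-1)*l₁) (h*l₁), ∑ j ∈ Finset.Ioc ((k-1)*l₂) (k*l₂), K := by
        refine Finset.sum_le_sum fun i hi => Finset.sum_le_sum fun j hj => hZ i hi j hj
    _ = K * ((l₁:ℝ) * (l₂:ℝ)) := by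
        rw [Finset.sum_const, Finset.sum_const, card_Ioc_block _ _ hk, card_Ioc_block _ _ hh,
          nsmul_eq_mul, nsmul_eq_mul]
        ring

lemma blkMean_sub_const (l₁ l₂ : ℕ) (hl₁ : 0 < l₁) (hl₂ : 0 < l₂) (h k : ℕ)
    (hh : 1 ≤ h) (hk : 1 ≤ k) (Z : ℕ → ℕ → ℝ) (r : ℝ) :
    blkMean l₁ l₂ h k (fun i j => Z i j - r) = blkMean l₁ l₂ h k Z - r := by
  have hl₁' : (0:ℝ) < l₁ := by exact_mod_cast hl₁
  have hl₂' : (0:ℝ) < l₂ := by exact_mod_cast hl₂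
  rw [blkMean, blkMean]
  have : ∀ i, (∑ j ∈ Finset.Ioc ((k-1)*l₂) (k*l₂), (Z i j - r))
      = (∑ j ∈ Finset.Ioc ((k-1)*l₂) (k*l₂), Z i j) - (l₂:ℝ) * r := by
    intro i
    rw [Finset.sum_sub_distrib, Finset.sum_const, card_Ioc_block _ _ hk, nsmul_eq_mul]
  rw [Finset.sum_congr rfl fun i _ => this i, Finset.sum_sub_distrib, Finset.sum_const,
    card_Ioc_block _ _ hh, nsmul_eq_mul]
  field_simp


lemma avg_const (b₁ b₂ : ℕ) (hb₁ : 0 < b₁) (hb₂ : 0 < b₂) (K : ℝ) :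
    (1 / ((b₁:ℝ) * (b₂:ℝ))) * ∑ _h ∈ Finset.Icc 1 b₁, ∑ _k ∈ Finset.Icc 1 b₂, K = K := by
  have hb₁' : (0:ℝ) < b₁ := by exact_mod_cast hb₁
  have hb₂' : (0:ℝ) < b₂ := by exact_mod_cast hb₂
  simp only [Finset.sum_const, Nat.card_Icc, Nat.add_sub_cancel, nsmul_eq_mul]
  field_simp

lemma avg_calc (b₁ b₂ : ℕ) (hb₁ : 0 < b₁) (hb₂ : 0 < b₂) (f : ℕ → ℕ → ℝ) (c K : ℝ) :
    (1 / ((b₁:ℝ)*(b₂:ℝ))) * ∑ h ∈ Finset.Icc 1 b₁, ∑ k ∈ Finset.Icc 1 b₂, (c * (f h k + K))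
      = c * ((1 / ((b₁:ℝ)*(b₂:ℝ))) *
          ∑ h ∈ Finset.Icc 1 b₁, ∑ k ∈ Finset.Icc 1 b₂, f h k) + c * K := by
  have hb₁' : (0:ℝ) < b₁ := by exact_mod_cast hb₁
  have hb₂' : (0:ℝ) < b₂ := by exact_mod_cast hb₂
  have h1 : ∀ h, (∑ k ∈ Finset.Icc 1 b₂, (c * (f h k + K)))
      = c * (∑ k ∈ Finset.Icc 1 b₂, f h k) + (b₂:ℝ) * (c * K) := by
    intro h
    simp only [mul_add, Finset.sum_add_distrib, Finset.sum_const, Nat.card_Icc,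
      Nat.add_sub_cancel, nsmul_eq_mul, Finset.mul_sum]
  rw [Finset.sum_congr rfl fun h _ => h1 h]
  rw [Finset.sum_add_distrib, Finset.sum_const, ← Finset.mul_sum, Nat.card_Icc,
    Nat.add_sub_cancel, nsmul_eq_mul]
  field_simp

/-- the centered block averages may be replaced by the centered block
representatives: the difference of the two empirical variabilities vanishes. -/
theorem block_averages_vs_representatives
    (s₁ s₂ : ℝ) (hs₁ : s₁ ∈ Set.Ioo (1/2 : ℝ) 1) (hs₂ : s₂ ∈ Set.Ioo (1/2 : ℝ) 1)
    (μ : ℝ → ℝ → ℝ) (hμ : Assumption1 μ) :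
    Tendsto
      (fun nm : ℕ × ℕ =>
        |(1 / ((blkCnt s₁ nm.1 : ℝ) * (blkCnt s₂ nm.2 : ℝ))) *
          ∑ h ∈ Finset.Icc 1 (blkCnt s₁ nm.1), ∑ k ∈ Finset.Icc 1 (blkCnt s₂ nm.2),
            ((muBlk s₁ s₂ μ nm h k - muBlkAvg s₁ s₂ μ nm) ^ 2
              - (muRep s₁ s₂ μ nm h k - muRepAvg s₁ s₂ μ nm) ^ 2)|)
      (tileFilter s₁ s₂) (𝓝 0) := by
  classical
  obtain ⟨ns, μ', c, C, hcont, hmeasC, hCsub, hdisjC, hfront, hne, hdecomp⟩ := hμ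
  have hsqcompact : IsCompact (Set.Icc (0:ℝ) 1 ×ˢ Set.Icc (0:ℝ) 1) :=
    isCompact_Icc.prod isCompact_Icc
  obtain ⟨M₀, hM₀⟩ := hsqcompact.exists_bound_of_continuousOn hcont
  set cS : ℝ := ∑ i, |c i| with hcS
  have hcS0 : (0:ℝ) ≤ cS := Finset.sum_nonneg fun i _ => abs_nonneg _
  set M : ℝ := |M₀| + cS + 1 with hM
  have hMpos : (0:ℝ) < M := by positivity
  have hμbound : ∀ x y, (x, y) ∈ (Set.Icc (0:ℝ) 1 ×ˢ Set.Icc (0:ℝ) 1) → |μ x y| ≤ M := by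
    intro x y hxy
    rw [hdecomp]
    have h1 : |μ' x y| ≤ |M₀| := by
      have := hM₀ (x, y) hxy
      rw [Real.norm_eq_abs] at this
      exact this.trans (le_abs_self _)
    have h2 : |∑ i, c i * (C i).indicator (fun _ => (1:ℝ)) (x, y)| ≤ cS := by
      refine (Finset.abs_sum_le_sum_abs _ _).trans ?_
      refine Finset.sum_le_sum fun i _ => ?_
      rw [abs_mul]
      by_cases hmem : (x, y) ∈ C i
      · simp [Set.indicator_of_mem hmem]
      · simp [Set.indicator_of_notMem hmem, abs_nonneg]
    calc |μ' x y + ∑ i, c i * (C i).indicator (fun _ => (1:ℝ)) (x, y)|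
        ≤ |μ' x y| + |∑ i, c i * (C i).indicator (fun _ => (1:ℝ)) (x, y)| := abs_add_le _ _
      _ ≤ |M₀| + cS := add_le_add h1 h2
      _ ≤ M := by rw [hM]; linarith
  have huc := (hsqcompact.uniformContinuousOn_of_continuous hcont)
  rw [Metric.uniformContinuousOn_iff] at huc
  rw [Metric.tendsto_nhds]
  intro ε hε
  set ε₁ : ℝ := ε / (32 * M) with hε₁
  have hε₁pos : 0 < ε₁ := by positivity
  set ε₂ : ℝ := ε / (32 * M * (cS + 1)) with hε₂
  have hε₂pos : 0 < ε₂ := by positivity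
  obtain ⟨δ', hδ'pos, hδ'⟩ := huc ε₁ hε₁pos
  obtain ⟨δ₀, hδ₀, hδ₀pos⟩ : ∃ δ₀ : ℝ,
      (∀ i, volume (Metric.cthickening δ₀ (frontier (C i))) ≤ ENNReal.ofReal ε₂) ∧
        δ₀ ∈ Set.Ioi (0:ℝ) := by
    have hev : ∀ᶠ r in 𝓝 (0:ℝ),
        ∀ i, volume (Metric.cthickening r (frontier (C i))) ≤ ENNReal.ofReal ε₂ := by
      refine Filter.eventually_all.mpr fun i => ?_
      have hbdd : Bornology.IsBounded (frontier (C i)) := by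
        refine hsqcompact.isBounded.subset ?_
        refine (frontier_subset_closure).trans ?_
        refine (closure_mono (hCsub i)).trans ?_
        rw [hsqcompact.isClosed.closure_eq]
      have hcomp : IsCompact (frontier (C i)) :=
        Metric.isCompact_of_isClosed_isBounded isClosed_frontier hbdd
      have htd := tendsto_measure_cthickening_of_isCompact (μ := volume) hcomp
      rw [hfront i] at htd
      have hpos : (0:ENNReal) < ENNReal.ofReal ε₂ := by simp [hε₂pos]
      filter_upwards [htd.eventually (gt_mem_nhds hpos)] with r hr using hr.le
    exact ((hev.filter_mono (nhdsWithin_le_nhds (s := Set.Ioi (0:ℝ)))).and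
      self_mem_nhdsWithin).exists
  rw [Set.mem_Ioi] at hδ₀pos
  set Breq : ℝ := max (max (4/δ₀) (2/δ')) 1 with hBreq
  have hP₁ : ∀ᶠ n in (atTop ⊓ Filter.principal {n : ℕ | blkCnt s₁ n * blkLen s₁ n = n}),
      blkCnt s₁ n * blkLen s₁ n = n ∧ Breq ≤ (blkCnt s₁ n : ℝ) := by
    refine Filter.Eventually.and ?_ ((blkCnt_tendsto' s₁ hs₁).eventually_ge_atTop Breq)
    rw [eventually_inf_principal]
    exact Filter.Eventually.of_forall fun n hn => hn
  have hP₂ : ∀ᶠ m in (atTop ⊓ Filter.principal {m : ℕ | blkCnt s₂ m * blkLen s₂ m = m}),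
      blkCnt s₂ m * blkLen s₂ m = m ∧ Breq ≤ (blkCnt s₂ m : ℝ) := by
    refine Filter.Eventually.and ?_ ((blkCnt_tendsto' s₂ hs₂).eventually_ge_atTop Breq)
    rw [eventually_inf_principal]
    exact Filter.Eventually.of_forall fun m hm => hm
  rw [tileFilter]
  filter_upwards [hP₁.prod_mk hP₂] with nm hnm
  obtain ⟨⟨htile₁, hB₁⟩, ⟨htile₂, hB₂⟩⟩ := hnm
  rw [Real.dist_eq, sub_zero, abs_abs]
  set b₁ := blkCnt s₁ nm.1 with hb₁def
  set b₂ := blkCnt s₂ nm.2 with hb₂def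
  set l₁ := blkLen s₁ nm.1 with hl₁def
  set l₂ := blkLen s₂ nm.2 with hl₂def
  have hB1ge1 : (1:ℝ) ≤ (b₁:ℝ) := le_trans (le_max_right _ _) hB₁
  have hB2ge1 : (1:ℝ) ≤ (b₂:ℝ) := le_trans (le_max_right _ _) hB₂
  have hb₁pos : (0:ℝ) < b₁ := lt_of_lt_of_le one_pos hB1ge1
  have hb₂pos : (0:ℝ) < b₂ := lt_of_lt_of_le one_pos hB2ge1
  have hb₁n : 0 < b₁ := by exact_mod_cast hb₁pos
  have hb₂n : 0 < b₂ := by exact_mod_cast hb₂pos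
  have hl₁n : 0 < l₁ := by
    rcases Nat.eq_zero_or_pos l₁ with h0 | h0
    · exfalso
      rw [h0, Nat.mul_zero] at htile₁
      have : b₁ = 0 := by
        rw [hb₁def, ← htile₁]
        simp [blkCnt, blkLen]
      omega
    · exact h0
  have hl₂n : 0 < l₂ := by
    rcases Nat.eq_zero_or_pos l₂ with h0 | h0
    · exfalso
      rw [h0, Nat.mul_zero] at htile₂
      have : b₂ = 0 := by
        rw [hb₂def, ← htile₂]
        simp [blkCnt, blkLen]
      omega
    · exact h0
  have hl₁pos : (0:ℝ) < l₁ := by exact_mod_cast hl₁n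
  have hl₂pos : (0:ℝ) < l₂ := by exact_mod_cast hl₂n
  have hnreal : (b₁:ℝ) * (l₁:ℝ) = (nm.1:ℝ) := by exact_mod_cast htile₁
  have hmreal : (b₂:ℝ) * (l₂:ℝ) = (nm.2:ℝ) := by exact_mod_cast htile₂
  have hn' : (0:ℝ) < (nm.1:ℝ) := by rw [← hnreal]; exact mul_pos hb₁pos hl₁pos
  have hm' : (0:ℝ) < (nm.2:ℝ) := by rw [← hmreal]; exact mul_pos hb₂pos hl₂pos
  set δ : ℝ := 1/(b₁:ℝ) + 1/(b₂:ℝ) with hδdef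
  have h1b₁ : (0:ℝ) < 1/(b₁:ℝ) := one_div_pos.mpr hb₁pos
  have h1b₂ : (0:ℝ) < 1/(b₂:ℝ) := one_div_pos.mpr hb₂pos
  have hδpos : 0 < δ := by rw [hδdef]; linarith
  have h4δ₀ : 4/δ₀ ≤ (b₁:ℝ) := le_trans ((le_max_left _ _).trans (le_max_left _ _)) hB₁
  have h4δ₀' : 4/δ₀ ≤ (b₂:ℝ) := le_trans ((le_max_left _ _).trans (le_max_left _ _)) hB₂
  have h2δ' : 2/δ' ≤ (b₁:ℝ) := le_trans ((le_max_right _ _).trans (le_max_left _ _)) hB₁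
  have h2δ'' : 2/δ' ≤ (b₂:ℝ) := le_trans ((le_max_right _ _).trans (le_max_left _ _)) hB₂
  have hb₁δ₀ : 1/(b₁:ℝ) ≤ δ₀/4 := by
    rw [div_le_div_iff₀ hb₁pos (by norm_num : (0:ℝ) < 4)]
    have := (div_le_iff₀ hδ₀pos).mp h4δ₀
    linarith
  have hb₂δ₀ : 1/(b₂:ℝ) ≤ δ₀/4 := by
    rw [div_le_div_iff₀ hb₂pos (by norm_num : (0:ℝ) < 4)]
    have := (div_le_iff₀ hδ₀pos).mp h4δ₀'
    linarith
  have hb₁δ' : 1/(b₁:ℝ) ≤ δ'/2 := by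
    rw [div_le_div_iff₀ hb₁pos (by norm_num : (0:ℝ) < 2)]
    have := (div_le_iff₀ hδ'pos).mp h2δ'
    linarith
  have hb₂δ' : 1/(b₂:ℝ) ≤ δ'/2 := by
    rw [div_le_div_iff₀ hb₂pos (by norm_num : (0:ℝ) < 2)]
    have := (div_le_iff₀ hδ'pos).mp h2δ''
    linarith
  have hδδ₀ : δ + δ ≤ δ₀ := by rw [hδdef]; linarith
  have hhalf : max (1/(b₁:ℝ)) (1/(b₂:ℝ)) ≤ δ'/2 := max_le hb₁δ' hb₂δ'
  -- coordinate estimates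
  have hcoord₁ : ∀ h ∈ Finset.Icc 1 b₁, ∀ i ∈ Finset.Ioc ((h-1)*l₁) (h*l₁),
      0 ≤ (i:ℝ)/(nm.1:ℝ) ∧ (i:ℝ)/(nm.1:ℝ) ≤ 1 ∧
        |(i:ℝ)/(nm.1:ℝ) - (h:ℝ)/(b₁:ℝ)| ≤ 1/(b₁:ℝ) := by
    intro h hh i hi
    rw [Finset.mem_Icc] at hh
    rw [Finset.mem_Ioc] at hi
    have hh1 : 1 ≤ h := hh.1
    have hhb : (h:ℝ) ≤ (b₁:ℝ) := by exact_mod_cast hh.2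
    have hiu : (i:ℝ) ≤ (h:ℝ) * (l₁:ℝ) := by exact_mod_cast hi.2
    have hil : ((h:ℝ) - 1) * (l₁:ℝ) ≤ (i:ℝ) := by
      have h0 : ((h-1) * l₁ : ℕ) ≤ i := hi.1.le
      have h2 : (((h-1) * l₁ : ℕ) : ℝ) = ((h:ℝ) - 1) * (l₁:ℝ) := by
        rw [Nat.cast_mul, Nat.cast_sub hh1, Nat.cast_one]
      rw [← h2]; exact_mod_cast h0
    have hup : (i:ℝ)/(nm.1:ℝ) ≤ (h:ℝ)/(b₁:ℝ) := by
      rw [div_le_div_iff₀ hn' hb₁pos]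
      calc (i:ℝ) * b₁ ≤ ((h:ℝ)*(l₁:ℝ)) * b₁ := mul_le_mul_of_nonneg_right hiu hb₁pos.le
        _ = (h:ℝ) * ((b₁:ℝ)*(l₁:ℝ)) := by ring
        _ = (h:ℝ) * (nm.1:ℝ) := by rw [hnreal]
    have hlo : ((h:ℝ)-1)/(b₁:ℝ) ≤ (i:ℝ)/(nm.1:ℝ) := by
      rw [div_le_div_iff₀ hb₁pos hn']
      calc ((h:ℝ)-1) * (nm.1:ℝ) = (((h:ℝ)-1)*(l₁:ℝ)) * (b₁:ℝ) := by rw [← hnreal]; ring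
        _ ≤ (i:ℝ) * (b₁:ℝ) := mul_le_mul_of_nonneg_right hil hb₁pos.le
    rw [show ((h:ℝ)-1)/(b₁:ℝ) = (h:ℝ)/(b₁:ℝ) - 1/(b₁:ℝ) from by ring] at hlo
    refine ⟨by positivity, hup.trans (by rw [div_le_one hb₁pos]; exact hhb), ?_⟩
    rw [abs_le]
    constructor <;> linarith
  have hcoord₂ : ∀ k ∈ Finset.Icc 1 b₂, ∀ j ∈ Finset.Ioc ((k-1)*l₂) (k*l₂),
      0 ≤ (j:ℝ)/(nm.2:ℝ) ∧ (j:ℝ)/(nm.2:ℝ) ≤ 1 ∧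
        |(j:ℝ)/(nm.2:ℝ) - (k:ℝ)/(b₂:ℝ)| ≤ 1/(b₂:ℝ) := by
    intro k hk j hj
    rw [Finset.mem_Icc] at hk
    rw [Finset.mem_Ioc] at hj
    have hk1 : 1 ≤ k := hk.1
    have hkb : (k:ℝ) ≤ (b₂:ℝ) := by exact_mod_cast hk.2
    have hju : (j:ℝ) ≤ (k:ℝ) * (l₂:ℝ) := by exact_mod_cast hj.2
    have hjl : ((k:ℝ) - 1) * (l₂:ℝ) ≤ (j:ℝ) := by
      have h0 : ((k-1) * l₂ : ℕ) ≤ j := hj.1.le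
      have h2 : (((k-1) * l₂ : ℕ) : ℝ) = ((k:ℝ) - 1) * (l₂:ℝ) := by
        rw [Nat.cast_mul, Nat.cast_sub hk1, Nat.cast_one]
      rw [← h2]; exact_mod_cast h0
    have hup : (j:ℝ)/(nm.2:ℝ) ≤ (k:ℝ)/(b₂:ℝ) := by
      rw [div_le_div_iff₀ hm' hb₂pos]
      calc (j:ℝ) * b₂ ≤ ((k:ℝ)*(l₂:ℝ)) * b₂ := mul_le_mul_of_nonneg_right hju hb₂pos.le
        _ = (k:ℝ) * ((b₂:ℝ)*(l₂:ℝ)) := by ring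
        _ = (k:ℝ) * (nm.2:ℝ) := by rw [hmreal]
    have hlo : ((k:ℝ)-1)/(b₂:ℝ) ≤ (j:ℝ)/(nm.2:ℝ) := by
      rw [div_le_div_iff₀ hb₂pos hm']
      calc ((k:ℝ)-1) * (nm.2:ℝ) = (((k:ℝ)-1)*(l₂:ℝ)) * (b₂:ℝ) := by rw [← hmreal]; ring
        _ ≤ (j:ℝ) * (b₂:ℝ) := mul_le_mul_of_nonneg_right hjl hb₂pos.le
    rw [show ((k:ℝ)-1)/(b₂:ℝ) = (k:ℝ)/(b₂:ℝ) - 1/(b₂:ℝ) from by ring] at hlo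
    refine ⟨by positivity, hup.trans (by rw [div_le_one hb₂pos]; exact hkb), ?_⟩
    rw [abs_le]
    constructor <;> linarith
  have hrep₁ : ∀ h ∈ Finset.Icc 1 b₁, 0 ≤ (h:ℝ)/(b₁:ℝ) ∧ (h:ℝ)/(b₁:ℝ) ≤ 1 := by
    intro h hh
    refine ⟨by positivity, ?_⟩
    rw [div_le_one hb₁pos]
    exact_mod_cast (Finset.mem_Icc.mp hh).2
  have hrep₂ : ∀ k ∈ Finset.Icc 1 b₂, 0 ≤ (k:ℝ)/(b₂:ℝ) ∧ (k:ℝ)/(b₂:ℝ) ≤ 1 := by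
    intro k hk
    refine ⟨by positivity, ?_⟩
    rw [div_le_one hb₂pos]
    exact_mod_cast (Finset.mem_Icc.mp hk).2
  -- the key pointwise bound
  have hkey : ∀ h ∈ Finset.Icc 1 b₁, ∀ k ∈ Finset.Icc 1 b₂,
      ∀ i ∈ Finset.Ioc ((h-1)*l₁) (h*l₁), ∀ j ∈ Finset.Ioc ((k-1)*l₂) (k*l₂),
      |μ ((i:ℝ)/(nm.1:ℝ)) ((j:ℝ)/(nm.2:ℝ)) - μ ((h:ℝ)/(b₁:ℝ)) ((k:ℝ)/(b₂:ℝ))|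
        ≤ ε₁ + ∑ t, |c t| * (Metric.cthickening δ (frontier (C t))).indicator
            (fun _ => (1:ℝ)) ((h:ℝ)/(b₁:ℝ), (k:ℝ)/(b₂:ℝ)) := by
    intro h hh k hk i hi j hj
    obtain ⟨hq1a, hq1b, hq1c⟩ := hcoord₁ h hh i hi
    obtain ⟨hq2a, hq2b, hq2c⟩ := hcoord₂ k hk j hj
    obtain ⟨hp1a, hp1b⟩ := hrep₁ h hh
    obtain ⟨hp2a, hp2b⟩ := hrep₂ k hk
    have hqsq : ((i:ℝ)/(nm.1:ℝ), (j:ℝ)/(nm.2:ℝ)) ∈ Set.Icc (0:ℝ) 1 ×ˢ Set.Icc (0:ℝ) 1 :=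
      ⟨⟨hq1a, hq1b⟩, ⟨hq2a, hq2b⟩⟩
    have hpsq : ((h:ℝ)/(b₁:ℝ), (k:ℝ)/(b₂:ℝ)) ∈ Set.Icc (0:ℝ) 1 ×ˢ Set.Icc (0:ℝ) 1 :=
      ⟨⟨hp1a, hp1b⟩, ⟨hp2a, hp2b⟩⟩
    have hdqp : dist ((i:ℝ)/(nm.1:ℝ), (j:ℝ)/(nm.2:ℝ)) ((h:ℝ)/(b₁:ℝ), (k:ℝ)/(b₂:ℝ))
        ≤ max (1/(b₁:ℝ)) (1/(b₂:ℝ)) := by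
      rw [Prod.dist_eq]
      refine max_le_max ?_ ?_
      · rw [Real.dist_eq]; exact hq1c
      · rw [Real.dist_eq]; exact hq2c
    have hdqδ : dist ((i:ℝ)/(nm.1:ℝ), (j:ℝ)/(nm.2:ℝ)) ((h:ℝ)/(b₁:ℝ), (k:ℝ)/(b₂:ℝ)) ≤ δ := by
      refine hdqp.trans (max_le ?_ ?_) <;> rw [hδdef] <;> linarith
    have hdqδ' : dist ((i:ℝ)/(nm.1:ℝ), (j:ℝ)/(nm.2:ℝ)) ((h:ℝ)/(b₁:ℝ), (k:ℝ)/(b₂:ℝ)) < δ' :=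
      lt_of_le_of_lt (hdqp.trans hhalf) (by linarith)
    have hμ'diff : |μ' ((i:ℝ)/(nm.1:ℝ)) ((j:ℝ)/(nm.2:ℝ)) - μ' ((h:ℝ)/(b₁:ℝ)) ((k:ℝ)/(b₂:ℝ))|
        ≤ ε₁ := by
      have := hδ' _ hqsq _ hpsq hdqδ'
      rw [Real.dist_eq] at this
      exact this.le
    have hind : ∀ t, |(C t).indicator (fun _ => (1:ℝ)) ((i:ℝ)/(nm.1:ℝ), (j:ℝ)/(nm.2:ℝ))
        - (C t).indicator (fun _ => (1:ℝ)) ((h:ℝ)/(b₁:ℝ), (k:ℝ)/(b₂:ℝ))|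
        ≤ (Metric.cthickening δ (frontier (C t))).indicator
            (fun _ => (1:ℝ)) ((h:ℝ)/(b₁:ℝ), (k:ℝ)/(b₂:ℝ)) := by
      intro t
      by_cases hpmem : ((h:ℝ)/(b₁:ℝ), (k:ℝ)/(b₂:ℝ)) ∈ Metric.cthickening δ (frontier (C t))
      · rw [Set.indicator_of_mem hpmem]
        rw [Set.indicator_apply, Set.indicator_apply]
        split_ifs <;> norm_num
      · rw [Set.indicator_of_notMem hpmem]
        have heqind := indicator_eq_of_notMem_cthickening' (C t) hδpos
          (by rw [dist_comm]; exact hdqδ) hpmem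
        rw [← heqind]
        simp
    have e : μ ((i:ℝ)/(nm.1:ℝ)) ((j:ℝ)/(nm.2:ℝ)) - μ ((h:ℝ)/(b₁:ℝ)) ((k:ℝ)/(b₂:ℝ))
        = (μ' ((i:ℝ)/(nm.1:ℝ)) ((j:ℝ)/(nm.2:ℝ)) - μ' ((h:ℝ)/(b₁:ℝ)) ((k:ℝ)/(b₂:ℝ)))
          + ∑ t, c t * ((C t).indicator (fun _ => (1:ℝ)) ((i:ℝ)/(nm.1:ℝ), (j:ℝ)/(nm.2:ℝ))
              - (C t).indicator (fun _ => (1:ℝ)) ((h:ℝ)/(b₁:ℝ), (k:ℝ)/(b₂:ℝ))) := by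
      rw [hdecomp, hdecomp]
      rw [Finset.sum_congr rfl (fun t _ => mul_sub (c t) _ _), Finset.sum_sub_distrib]
      ring
    rw [e]
    refine (abs_add_le _ _).trans (add_le_add hμ'diff ?_)
    refine (Finset.abs_sum_le_sum_abs _ _).trans ?_
    refine Finset.sum_le_sum fun t _ => ?_
    rw [abs_mul]
    exact mul_le_mul_of_nonneg_left (hind t) (abs_nonneg _)
  -- |muBlk - muRep| ≤ g
  have hunfoldA : ∀ h k, muBlk s₁ s₂ μ nm h k
      = blkMean l₁ l₂ h k (fun i j => μ ((i:ℝ)/(nm.1:ℝ)) ((j:ℝ)/(nm.2:ℝ))) := by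
    intro h k
    rw [muBlk, ← hl₁def, ← hl₂def]
  have hunfoldR : ∀ h k, muRep s₁ s₂ μ nm h k = μ ((h:ℝ)/(b₁:ℝ)) ((k:ℝ)/(b₂:ℝ)) := by
    intro h k
    rw [muRep, ← hb₁def, ← hb₂def]
  have hAR : ∀ h ∈ Finset.Icc 1 b₁, ∀ k ∈ Finset.Icc 1 b₂,
      |muBlk s₁ s₂ μ nm h k - muRep s₁ s₂ μ nm h k|
        ≤ ε₁ + ∑ t, |c t| * (Metric.cthickening δ (frontier (C t))).indicator
            (fun _ => (1:ℝ)) ((h:ℝ)/(b₁:ℝ), (k:ℝ)/(b₂:ℝ)) := by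
    intro h hh k hk
    have hh1 : 1 ≤ h := (Finset.mem_Icc.mp hh).1
    have hk1 : 1 ≤ k := (Finset.mem_Icc.mp hk).1
    have hrw : muBlk s₁ s₂ μ nm h k - muRep s₁ s₂ μ nm h k
        = blkMean l₁ l₂ h k (fun i j =>
            μ ((i:ℝ)/(nm.1:ℝ)) ((j:ℝ)/(nm.2:ℝ)) - muRep s₁ s₂ μ nm h k) := by
      rw [blkMean_sub_const l₁ l₂ hl₁n hl₂n h k hh1 hk1, hunfoldA]
    rw [hrw]
    refine blk_abs_le l₁ l₂ hl₁n hl₂n h k hh1 hk1 _ _ fun i hi j hj => ?_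
    rw [hunfoldR]
    exact hkey h hh k hk i hi j hj
  -- boundedness
  have hMA : ∀ h ∈ Finset.Icc 1 b₁, ∀ k ∈ Finset.Icc 1 b₂, |muBlk s₁ s₂ μ nm h k| ≤ M := by
    intro h hh k hk
    have hh1 : 1 ≤ h := (Finset.mem_Icc.mp hh).1
    have hk1 : 1 ≤ k := (Finset.mem_Icc.mp hk).1
    rw [hunfoldA]
    refine blk_abs_le l₁ l₂ hl₁n hl₂n h k hh1 hk1 _ _ fun i hi j hj => ?_
    obtain ⟨hq1a, hq1b, _⟩ := hcoord₁ h hh i hi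
    obtain ⟨hq2a, hq2b, _⟩ := hcoord₂ k hk j hj
    exact hμbound _ _ ⟨⟨hq1a, hq1b⟩, ⟨hq2a, hq2b⟩⟩
  have hMR : ∀ h ∈ Finset.Icc 1 b₁, ∀ k ∈ Finset.Icc 1 b₂, |muRep s₁ s₂ μ nm h k| ≤ M := by
    intro h hh k hk
    obtain ⟨hp1a, hp1b⟩ := hrep₁ h hh
    obtain ⟨hp2a, hp2b⟩ := hrep₂ k hk
    rw [hunfoldR]
    exact hμbound _ _ ⟨⟨hp1a, hp1b⟩, ⟨hp2a, hp2b⟩⟩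
  have hunfoldAavg : muBlkAvg s₁ s₂ μ nm
      = (1 / ((b₁:ℝ) * (b₂:ℝ))) * ∑ h ∈ Finset.Icc 1 b₁, ∑ k ∈ Finset.Icc 1 b₂,
          muBlk s₁ s₂ μ nm h k := by
    rw [muBlkAvg, ← hb₁def, ← hb₂def]
  have hunfoldRavg : muRepAvg s₁ s₂ μ nm
      = (1 / ((b₁:ℝ) * (b₂:ℝ))) * ∑ h ∈ Finset.Icc 1 b₁, ∑ k ∈ Finset.Icc 1 b₂,
          muRep s₁ s₂ μ nm h k := by
    rw [muRepAvg, ← hb₁def, ← hb₂def]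
  have hMAavg : |muBlkAvg s₁ s₂ μ nm| ≤ M := by
    rw [hunfoldAavg]
    calc |(1 / ((b₁:ℝ) * (b₂:ℝ))) * ∑ h ∈ Finset.Icc 1 b₁, ∑ k ∈ Finset.Icc 1 b₂,
          muBlk s₁ s₂ μ nm h k|
        ≤ (1 / ((b₁:ℝ) * (b₂:ℝ))) * ∑ h ∈ Finset.Icc 1 b₁, ∑ k ∈ Finset.Icc 1 b₂, M :=
          avg_abs_le_avg b₁ b₂ _ _ hMA
      _ = M := avg_const b₁ b₂ hb₁n hb₂n M
  have hMRavg : |muRepAvg s₁ s₂ μ nm| ≤ M := by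
    rw [hunfoldRavg]
    calc |(1 / ((b₁:ℝ) * (b₂:ℝ))) * ∑ h ∈ Finset.Icc 1 b₁, ∑ k ∈ Finset.Icc 1 b₂,
          muRep s₁ s₂ μ nm h k|
        ≤ (1 / ((b₁:ℝ) * (b₂:ℝ))) * ∑ h ∈ Finset.Icc 1 b₁, ∑ k ∈ Finset.Icc 1 b₂, M :=
          avg_abs_le_avg b₁ b₂ _ _ hMR
      _ = M := avg_const b₁ b₂ hb₁n hb₂n M
  -- G
  set G : ℝ := (1 / ((b₁:ℝ) * (b₂:ℝ))) * ∑ h ∈ Finset.Icc 1 b₁, ∑ k ∈ Finset.Icc 1 b₂,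
      (ε₁ + ∑ t, |c t| * (Metric.cthickening δ (frontier (C t))).indicator
          (fun _ => (1:ℝ)) ((h:ℝ)/(b₁:ℝ), (k:ℝ)/(b₂:ℝ))) with hGdef
  have hABavg : |muBlkAvg s₁ s₂ μ nm - muRepAvg s₁ s₂ μ nm| ≤ G := by
    have hsplit : muBlkAvg s₁ s₂ μ nm - muRepAvg s₁ s₂ μ nm
        = (1 / ((b₁:ℝ) * (b₂:ℝ))) * ∑ h ∈ Finset.Icc 1 b₁, ∑ k ∈ Finset.Icc 1 b₂,
            (muBlk s₁ s₂ μ nm h k - muRep s₁ s₂ μ nm h k) := by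
      rw [hunfoldAavg, hunfoldRavg, ← mul_sub, ← Finset.sum_sub_distrib]
      congr 1
      exact Finset.sum_congr rfl fun h _ => (Finset.sum_sub_distrib ..).symm
    rw [hsplit, hGdef]
    exact avg_abs_le_avg b₁ b₂ _ _ hAR
  -- pointwise bound for the squares
  have hF : ∀ h ∈ Finset.Icc 1 b₁, ∀ k ∈ Finset.Icc 1 b₂,
      |(muBlk s₁ s₂ μ nm h k - muBlkAvg s₁ s₂ μ nm) ^ 2
          - (muRep s₁ s₂ μ nm h k - muRepAvg s₁ s₂ μ nm) ^ 2|
        ≤ 4*M*((ε₁ + ∑ t, |c t| * (Metric.cthickening δ (frontier (C t))).indicator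
            (fun _ => (1:ℝ)) ((h:ℝ)/(b₁:ℝ), (k:ℝ)/(b₂:ℝ))) + G) := by
    intro h hh k hk
    have e : (muBlk s₁ s₂ μ nm h k - muBlkAvg s₁ s₂ μ nm) ^ 2
        - (muRep s₁ s₂ μ nm h k - muRepAvg s₁ s₂ μ nm) ^ 2
        = ((muBlk s₁ s₂ μ nm h k - muBlkAvg s₁ s₂ μ nm)
            + (muRep s₁ s₂ μ nm h k - muRepAvg s₁ s₂ μ nm))
          * ((muBlk s₁ s₂ μ nm h k - muRep s₁ s₂ μ nm h k)
            - (muBlkAvg s₁ s₂ μ nm - muRepAvg s₁ s₂ μ nm)) := by ring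
    rw [e, abs_mul]
    have hs : |(muBlk s₁ s₂ μ nm h k - muBlkAvg s₁ s₂ μ nm)
        + (muRep s₁ s₂ μ nm h k - muRepAvg s₁ s₂ μ nm)| ≤ 4*M := by
      calc |(muBlk s₁ s₂ μ nm h k - muBlkAvg s₁ s₂ μ nm)
          + (muRep s₁ s₂ μ nm h k - muRepAvg s₁ s₂ μ nm)|
          ≤ |muBlk s₁ s₂ μ nm h k - muBlkAvg s₁ s₂ μ nm|
            + |muRep s₁ s₂ μ nm h k - muRepAvg s₁ s₂ μ nm| := abs_add_le _ _
        _ ≤ (|muBlk s₁ s₂ μ nm h k| + |muBlkAvg s₁ s₂ μ nm|)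
            + (|muRep s₁ s₂ μ nm h k| + |muRepAvg s₁ s₂ μ nm|) :=
            add_le_add (abs_sub _ _) (abs_sub _ _)
        _ ≤ (M + M) + (M + M) :=
            add_le_add (add_le_add (hMA h hh k hk) hMAavg) (add_le_add (hMR h hh k hk) hMRavg)
        _ = 4*M := by ring
    have hd : |(muBlk s₁ s₂ μ nm h k - muRep s₁ s₂ μ nm h k)
        - (muBlkAvg s₁ s₂ μ nm - muRepAvg s₁ s₂ μ nm)|
        ≤ (ε₁ + ∑ t, |c t| * (Metric.cthickening δ (frontier (C t))).indicator
            (fun _ => (1:ℝ)) ((h:ℝ)/(b₁:ℝ), (k:ℝ)/(b₂:ℝ))) + G := by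
      refine (abs_sub _ _).trans (add_le_add (hAR h hh k hk) hABavg)
    exact mul_le_mul hs hd (abs_nonneg _) (by linarith)
  -- assemble
  have hmain : |(1 / ((b₁:ℝ) * (b₂:ℝ))) *
      ∑ h ∈ Finset.Icc 1 b₁, ∑ k ∈ Finset.Icc 1 b₂,
        ((muBlk s₁ s₂ μ nm h k - muBlkAvg s₁ s₂ μ nm) ^ 2
          - (muRep s₁ s₂ μ nm h k - muRepAvg s₁ s₂ μ nm) ^ 2)| ≤ 8*M*G := by
    calc |(1 / ((b₁:ℝ) * (b₂:ℝ))) *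
        ∑ h ∈ Finset.Icc 1 b₁, ∑ k ∈ Finset.Icc 1 b₂,
          ((muBlk s₁ s₂ μ nm h k - muBlkAvg s₁ s₂ μ nm) ^ 2
            - (muRep s₁ s₂ μ nm h k - muRepAvg s₁ s₂ μ nm) ^ 2)|
        ≤ (1 / ((b₁:ℝ) * (b₂:ℝ))) * ∑ h ∈ Finset.Icc 1 b₁, ∑ k ∈ Finset.Icc 1 b₂,
            (4*M*((ε₁ + ∑ t, |c t| * (Metric.cthickening δ (frontier (C t))).indicator
              (fun _ => (1:ℝ)) ((h:ℝ)/(b₁:ℝ), (k:ℝ)/(b₂:ℝ))) + G)) :=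
          avg_abs_le_avg b₁ b₂ _ _ hF
      _ = 4*M*G + 4*M*G := by
          rw [avg_calc b₁ b₂ hb₁n hb₂n _ (4*M) G, ← hGdef]
      _ = 8*M*G := by ring
  -- bound G
  have hGle : G ≤ ε₁ + cS * ε₂ := by
    have hswap : (∑ h ∈ Finset.Icc 1 b₁, ∑ k ∈ Finset.Icc 1 b₂,
        (ε₁ + ∑ t, |c t| * (Metric.cthickening δ (frontier (C t))).indicator
            (fun _ => (1:ℝ)) ((h:ℝ)/(b₁:ℝ), (k:ℝ)/(b₂:ℝ))))
        ≤ (b₁*b₂ : ℝ) * (ε₁ + cS * ε₂) := by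
      have hper : ∀ t, (∑ h ∈ Finset.Icc 1 b₁, ∑ k ∈ Finset.Icc 1 b₂,
          (Metric.cthickening δ (frontier (C t))).indicator
            (fun _ => (1:ℝ)) ((h:ℝ)/(b₁:ℝ), (k:ℝ)/(b₂:ℝ))) ≤ (b₁*b₂ : ℝ) * ε₂ := by
        intro t
        refine grid_count_le' b₁ b₂ hb₁n hb₂n _ δ ε₂ hε₂pos.le ?_ ?_ ?_
        · rw [hδdef]; linarith
        · rw [hδdef]; linarith
        · refine le_trans (measure_mono ((Metric.cthickening_cthickening_subset hδpos.le hδpos.le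
            _).trans (Metric.cthickening_mono hδδ₀ _))) (hδ₀ t)
      have hcount : (∑ h ∈ Finset.Icc 1 b₁, ∑ k ∈ Finset.Icc 1 b₂,
          ∑ t, |c t| * (Metric.cthickening δ (frontier (C t))).indicator
            (fun _ => (1:ℝ)) ((h:ℝ)/(b₁:ℝ), (k:ℝ)/(b₂:ℝ)))
          = ∑ t, |c t| * ∑ h ∈ Finset.Icc 1 b₁, ∑ k ∈ Finset.Icc 1 b₂,
              (Metric.cthickening δ (frontier (C t))).indicator
                (fun _ => (1:ℝ)) ((h:ℝ)/(b₁:ℝ), (k:ℝ)/(b₂:ℝ)) := by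
        rw [Finset.sum_congr rfl fun h _ => Finset.sum_comm, Finset.sum_comm]
        refine Finset.sum_congr rfl fun t _ => ?_
        rw [Finset.mul_sum]
        refine Finset.sum_congr rfl fun h _ => ?_
        rw [Finset.mul_sum]
      have hsum1 : (∑ h ∈ Finset.Icc 1 b₁, ∑ k ∈ Finset.Icc 1 b₂,
          (ε₁ + ∑ t, |c t| * (Metric.cthickening δ (frontier (C t))).indicator
              (fun _ => (1:ℝ)) ((h:ℝ)/(b₁:ℝ), (k:ℝ)/(b₂:ℝ))))
          = (b₁*b₂:ℝ) * ε₁ + ∑ t, |c t| * ∑ h ∈ Finset.Icc 1 b₁, ∑ k ∈ Finset.Icc 1 b₂,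
              (Metric.cthickening δ (frontier (C t))).indicator
                (fun _ => (1:ℝ)) ((h:ℝ)/(b₁:ℝ), (k:ℝ)/(b₂:ℝ)) := by
        rw [← hcount]
        simp only [Finset.sum_add_distrib, Finset.sum_const, Nat.card_Icc, Nat.add_sub_cancel,
          nsmul_eq_mul]
        push_cast
        ring
      rw [hsum1]
      have hsum2 : (∑ t, |c t| * ∑ h ∈ Finset.Icc 1 b₁, ∑ k ∈ Finset.Icc 1 b₂,
          (Metric.cthickening δ (frontier (C t))).indicator
            (fun _ => (1:ℝ)) ((h:ℝ)/(b₁:ℝ), (k:ℝ)/(b₂:ℝ)))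
          ≤ ∑ t, |c t| * ((b₁*b₂:ℝ) * ε₂) := by
        refine Finset.sum_le_sum fun t _ => ?_
        exact mul_le_mul_of_nonneg_left (hper t) (abs_nonneg _)
      have hsum3 : (∑ t, |c t| * ((b₁*b₂:ℝ) * ε₂)) = cS * ((b₁*b₂:ℝ) * ε₂) := by
        rw [hcS, Finset.sum_mul]
      calc (b₁*b₂:ℝ) * ε₁ + ∑ t, |c t| * ∑ h ∈ Finset.Icc 1 b₁, ∑ k ∈ Finset.Icc 1 b₂,
            (Metric.cthickening δ (frontier (C t))).indicator
              (fun _ => (1:ℝ)) ((h:ℝ)/(b₁:ℝ), (k:ℝ)/(b₂:ℝ))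
          ≤ (b₁*b₂:ℝ) * ε₁ + cS * ((b₁*b₂:ℝ) * ε₂) := by
            rw [← hsum3]; exact add_le_add le_rfl hsum2
        _ = (b₁*b₂ : ℝ) * (ε₁ + cS * ε₂) := by ring
    rw [hGdef]
    have hpos : (0:ℝ) < (b₁:ℝ)*(b₂:ℝ) := mul_pos hb₁pos hb₂pos
    calc (1 / ((b₁:ℝ) * (b₂:ℝ))) * ∑ h ∈ Finset.Icc 1 b₁, ∑ k ∈ Finset.Icc 1 b₂,
          (ε₁ + ∑ t, |c t| * (Metric.cthickening δ (frontier (C t))).indicator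
              (fun _ => (1:ℝ)) ((h:ℝ)/(b₁:ℝ), (k:ℝ)/(b₂:ℝ)))
        ≤ (1 / ((b₁:ℝ) * (b₂:ℝ))) * ((b₁*b₂ : ℝ) * (ε₁ + cS * ε₂)) :=
          mul_le_mul_of_nonneg_left hswap (by positivity)
      _ = ε₁ + cS * ε₂ := by
          rw [one_div, inv_mul_cancel_left₀ hpos.ne']
  -- numeric conclusion
  have h8ε₁ : 8*M*ε₁ = ε/4 := by
    rw [hε₁]
    field_simp
    ring
  have h8ε₂ : 8*M*(cS*ε₂) ≤ ε/4 := by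
    have hcS1 : (0:ℝ) < cS + 1 := by linarith
    have hkey2 : 8*M*(cS*ε₂) = (cS/(cS+1)) * (ε/4) := by
      rw [hε₂]
      field_simp
      ring
    rw [hkey2]
    have hle1 : cS/(cS+1) ≤ 1 := by
      rw [div_le_one (by linarith)]
      linarith
    calc (cS/(cS+1)) * (ε/4) ≤ 1 * (ε/4) :=
        mul_le_mul_of_nonneg_right hle1 (by linarith)
      _ = ε/4 := by ring
  calc |(1 / ((b₁:ℝ) * (b₂:ℝ))) *
      ∑ h ∈ Finset.Icc 1 b₁, ∑ k ∈ Finset.Icc 1 b₂,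
        ((muBlk s₁ s₂ μ nm h k - muBlkAvg s₁ s₂ μ nm) ^ 2
          - (muRep s₁ s₂ μ nm h k - muRepAvg s₁ s₂ μ nm) ^ 2)|
      ≤ 8*M*G := hmain
    _ ≤ 8*M*(ε₁ + cS*ε₂) := mul_le_mul_of_nonneg_left hGle (by linarith)
    _ = 8*M*ε₁ + 8*M*(cS*ε₂) := by ring
    _ ≤ ε/4 + ε/4 := by rw [h8ε₁]; exact add_le_add le_rfl h8ε₂
    _ < ε := by linarith
end
end

section
/- Let (Y_{ij})_{(i,j)∈ℕ²} be i.i.d. real-valued random variables with E[Y_{11}] = 0 and Var(Y_{11}) = σ² ∈ (0,∞). Let Ȳ_{hk} = ν̂_{hk} = (l_n l_m)^{−1} Σ_{(i,j)∈I_{hk}} Y_{ij} be the block means and Ȳ = (b_n b_m)^{−1} Σ_{h,k} Ȳ_{hk} their average. Then (b_n b_m)^{−1} Σ_{h=1}^{b_n} Σ_{k=1}^{b_m} (Ȳ_{hk} − Ȳ)² converges to 0 in probability as n, m → ∞; more precisely, l_n l_m · (b_n b_m)^{−1} Σ_{h,k} (Ȳ_{hk} − Ȳ)² converges in probability to σ².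 -/
open MeasureTheory ProbabilityTheory Filter Finset Topology

noncomputable section

/-- Average of the noise block means. -/
def noiseBlkAvg (s₁ s₂ : ℝ) {Ω : Type*} (Y : ℕ → ℕ → Ω → ℝ) (nm : ℕ × ℕ) (ω : Ω) : ℝ :=
  (1 / ((blkCnt s₁ nm.1 : ℝ) * (blkCnt s₂ nm.2 : ℝ))) *
    ∑ h ∈ Finset.Icc 1 (blkCnt s₁ nm.1), ∑ k ∈ Finset.Icc 1 (blkCnt s₂ nm.2),
      blkMean (blkLen s₁ nm.1) (blkLen s₂ nm.2) h k (fun i j => Y i j ω)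

set_option linter.unusedSectionVars false
set_option linter.unreachableTactic false
set_option linter.unusedTactic false
set_option maxHeartbeats 1000000

namespace NBMV

/-- The index block. -/
def blkI (ln lm h k : ℕ) : Finset (ℕ × ℕ) :=
  Finset.Ioc ((h - 1) * ln) (h * ln) ×ˢ Finset.Ioc ((k - 1) * lm) (k * lm)

/-- The full rectangle covered by the blocks. -/
def blkR (ln lm bn bm : ℕ) : Finset (ℕ × ℕ) :=
  Finset.Ioc 0 (bn * ln) ×ˢ Finset.Ioc 0 (bm * lm)

/-- All ordered pairs of distinct indices lying in a common block. -/
def blkP (ln lm bn bm : ℕ) : Finset ((ℕ × ℕ) × (ℕ × ℕ)) :=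
  (Finset.Icc 1 bn ×ˢ Finset.Icc 1 bm).biUnion fun hk =>
    ((blkI ln lm hk.1 hk.2) ×ˢ (blkI ln lm hk.1 hk.2)).filter fun x => x.1 ≠ x.2


lemma sum_Ioc_blocks {M : Type*} [AddCommMonoid M] (u : ℕ → M) (b l : ℕ) :
    ∑ h ∈ Finset.Icc 1 b, ∑ i ∈ Finset.Ioc ((h - 1) * l) (h * l), u i
      = ∑ i ∈ Finset.Ioc 0 (b * l), u i := by
  induction b with
  | zero => simp
  | succ b ih =>
    rw [Finset.sum_Icc_succ_top (by omega : 1 ≤ b + 1), ih]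
    rw [show (b + 1 - 1) * l = b * l by simp]
    exact Finset.sum_Ioc_consecutive _ (Nat.zero_le _)
      (by nlinarith : b * l ≤ (b + 1) * l)

lemma sum_blkI {M : Type*} [AddCommMonoid M] (v : ℕ × ℕ → M) (ln lm bn bm : ℕ) :
    ∑ h ∈ Finset.Icc 1 bn, ∑ k ∈ Finset.Icc 1 bm, ∑ p ∈ blkI ln lm h k, v p
      = ∑ p ∈ blkR ln lm bn bm, v p := by
  have inner : ∀ h, ∑ k ∈ Finset.Icc 1 bm, ∑ p ∈ blkI ln lm h k, v p
      = ∑ i ∈ Finset.Ioc ((h - 1) * ln) (h * ln), ∑ j ∈ Finset.Ioc 0 (bm * lm), v (i, j) := by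
    intro h
    calc ∑ k ∈ Finset.Icc 1 bm, ∑ p ∈ blkI ln lm h k, v p
        = ∑ k ∈ Finset.Icc 1 bm, ∑ i ∈ Finset.Ioc ((h - 1) * ln) (h * ln),
            ∑ j ∈ Finset.Ioc ((k - 1) * lm) (k * lm), v (i, j) :=
          Finset.sum_congr rfl fun k _ => by rw [blkI, Finset.sum_product]
      _ = ∑ i ∈ Finset.Ioc ((h - 1) * ln) (h * ln), ∑ k ∈ Finset.Icc 1 bm,
            ∑ j ∈ Finset.Ioc ((k - 1) * lm) (k * lm), v (i, j) := Finset.sum_comm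
      _ = _ := Finset.sum_congr rfl fun i _ => sum_Ioc_blocks (fun j => v (i, j)) bm lm
  rw [Finset.sum_congr rfl fun h _ => inner h,
    sum_Ioc_blocks (fun i => ∑ j ∈ Finset.Ioc 0 (bm * lm), v (i, j)) bn ln,
    blkR, Finset.sum_product]

lemma Ioc_mul_disjoint {l a b : ℕ} (ha : 1 ≤ a) (hb : 1 ≤ b) (hab : a ≠ b) :
    Disjoint (Finset.Ioc ((a - 1) * l) (a * l)) (Finset.Ioc ((b - 1) * l) (b * l)) := by
  rw [Finset.disjoint_left]
  intro x hx hx'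
  rw [Finset.mem_Ioc] at hx hx'
  rcases Nat.lt_or_ge a b with h | h
  · have h1 : a ≤ b - 1 := by omega
    have h2 : a * l ≤ (b - 1) * l := Nat.mul_le_mul_right l h1
    omega
  · have hba : b < a := by omega
    have h1 : b ≤ a - 1 := by omega
    have h2 : b * l ≤ (a - 1) * l := Nat.mul_le_mul_right l h1
    omega

lemma blkI_disjoint {ln lm h k h' k' : ℕ} (hh : 1 ≤ h) (hk : 1 ≤ k) (hh' : 1 ≤ h')
    (hk' : 1 ≤ k') (hne : (h, k) ≠ (h', k')) :
    Disjoint (blkI ln lm h k) (blkI ln lm h' k') := by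
  have : h ≠ h' ∨ k ≠ k' := by
    by_contra hcon
    push_neg at hcon
    exact hne (by rw [hcon.1, hcon.2])
  rcases this with hhh | hkk
  · have hd := Ioc_mul_disjoint (l := ln) hh hh' hhh
    rw [Finset.disjoint_left]
    intro p hp hp'
    rw [blkI, Finset.mem_product] at hp hp'
    exact Finset.disjoint_left.1 hd hp.1 hp'.1
  · have hd := Ioc_mul_disjoint (l := lm) hk hk' hkk
    rw [Finset.disjoint_left]
    intro p hp hp'
    rw [blkI, Finset.mem_product] at hp hp'
    exact Finset.disjoint_left.1 hd hp.2 hp'.2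

lemma card_blkI {ln lm h k : ℕ} (hh : 1 ≤ h) (hk : 1 ≤ k) :
    (blkI ln lm h k).card = ln * lm := by
  rw [blkI, Finset.card_product, Nat.card_Ioc, Nat.card_Ioc]
  obtain ⟨a, rfl⟩ : ∃ a, h = a + 1 := ⟨h - 1, by omega⟩
  obtain ⟨c, rfl⟩ : ∃ c, k = c + 1 := ⟨k - 1, by omega⟩
  simp only [Nat.add_sub_cancel, add_mul, one_mul]
  have e1 : a * ln + ln - a * ln = ln := by omega
  have e2 : c * lm + lm - c * lm = lm := by omega
  rw [e1, e2]

lemma card_blkR (ln lm bn bm : ℕ) : (blkR ln lm bn bm).card = bn * ln * (bm * lm) := by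
  simp [blkR, Nat.card_Ioc]

lemma sum_blkP {M : Type*} [AddCommMonoid M] (w : (ℕ × ℕ) × (ℕ × ℕ) → M) (ln lm bn bm : ℕ) :
    ∑ x ∈ blkP ln lm bn bm, w x
      = ∑ hk ∈ Finset.Icc 1 bn ×ˢ Finset.Icc 1 bm,
          ∑ x ∈ ((blkI ln lm hk.1 hk.2) ×ˢ (blkI ln lm hk.1 hk.2)).filter
            (fun x => x.1 ≠ x.2), w x := by
  rw [blkP, Finset.sum_biUnion]
  intro hk hhk hk' hhk' hne
  simp only [Finset.coe_product, Set.mem_prod, Finset.mem_coe, Finset.mem_Icc] at hhk hhk'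
  have hbd : Disjoint (blkI ln lm hk.1 hk.2) (blkI ln lm hk'.1 hk'.2) :=
    blkI_disjoint hhk.1.1 hhk.2.1 hhk'.1.1 hhk'.2.1
      (by simpa [Prod.ext_iff] using hne)
  apply Finset.disjoint_filter_filter
  rw [Finset.disjoint_left]
  intro x hx hx'
  rw [Finset.mem_product] at hx hx'
  exact Finset.disjoint_left.1 hbd hx.1 hx'.1

lemma card_blkP_le (ln lm bn bm : ℕ) :
    (blkP ln lm bn bm).card ≤ bn * bm * (ln * lm) ^ 2 := by
  calc (blkP ln lm bn bm).card
      ≤ ∑ hk ∈ Finset.Icc 1 bn ×ˢ Finset.Icc 1 bm,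
          (((blkI ln lm hk.1 hk.2) ×ˢ (blkI ln lm hk.1 hk.2)).filter
            (fun x => x.1 ≠ x.2)).card := Finset.card_biUnion_le
    _ ≤ ∑ hk ∈ Finset.Icc 1 bn ×ˢ Finset.Icc 1 bm, (ln * lm) ^ 2 := by
        apply Finset.sum_le_sum
        intro hk hhk
        rw [Finset.mem_product, Finset.mem_Icc, Finset.mem_Icc] at hhk
        calc (((blkI ln lm hk.1 hk.2) ×ˢ (blkI ln lm hk.1 hk.2)).filter
              (fun x => x.1 ≠ x.2)).card
            ≤ ((blkI ln lm hk.1 hk.2) ×ˢ (blkI ln lm hk.1 hk.2)).card :=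
              Finset.card_filter_le _ _
          _ = (ln * lm) ^ 2 := by
              rw [Finset.card_product, card_blkI hhk.1.1 hhk.2.1, sq]
    _ = bn * bm * (ln * lm) ^ 2 := by
        rw [Finset.sum_const, Finset.card_product, Nat.card_Icc, Nat.card_Icc]
        simp [smul_eq_mul]

lemma mem_blkP_ne {ln lm bn bm : ℕ} {x : (ℕ × ℕ) × (ℕ × ℕ)} (hx : x ∈ blkP ln lm bn bm) :
    x.1 ≠ x.2 := by
  rw [blkP, Finset.mem_biUnion] at hx
  obtain ⟨hk, _, hx⟩ := hx
  exact (Finset.mem_filter.1 hx).2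

lemma sum_sq_sub_mean {α : Type*} (s : Finset α) (y : α → ℝ) (hc : (s.card : ℝ) ≠ 0) :
    ∑ i ∈ s, (y i - (∑ j ∈ s, y j) / s.card) ^ 2
      = ∑ i ∈ s, y i ^ 2 - (∑ j ∈ s, y j) ^ 2 / s.card := by
  have expand : ∀ i, (y i - (∑ j ∈ s, y j) / s.card) ^ 2
      = y i ^ 2 - 2 * ((∑ j ∈ s, y j) / s.card) * y i + ((∑ j ∈ s, y j) / s.card) ^ 2 :=
    fun i => by ring
  rw [Finset.sum_congr rfl fun i _ => expand i, Finset.sum_add_distrib,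
    Finset.sum_sub_distrib, ← Finset.mul_sum, Finset.sum_const, nsmul_eq_mul]
  field_simp
  ring

lemma sq_sum_split {α : Type*} [DecidableEq α] (t : Finset α) (g : α → ℝ) :
    (∑ p ∈ t, g p) ^ 2 = ∑ p ∈ t, g p ^ 2
      + ∑ x ∈ (t ×ˢ t).filter (fun x => x.1 ≠ x.2), g x.1 * g x.2 := by
  have h1 : (∑ p ∈ t, g p) ^ 2 = ∑ x ∈ t ×ˢ t, g x.1 * g x.2 := by
    rw [sq, Finset.sum_mul_sum, ← Finset.sum_product']
  rw [h1, ← Finset.sum_filter_add_sum_filter_not (t ×ˢ t) (fun x => x.1 = x.2)]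
  congr 1
  have himg : (t ×ˢ t).filter (fun x => x.1 = x.2) = t.image fun p => (p, p) := by
    ext ⟨i, j⟩
    simp only [Finset.mem_filter, Finset.mem_product, Finset.mem_image]
    constructor
    · rintro ⟨⟨hi, _⟩, h⟩
      exact ⟨i, hi, by simp_all⟩
    · rintro ⟨p, hp, he⟩
      obtain ⟨rfl, rfl⟩ := Prod.mk.injEq .. ▸ (Prod.ext_iff.1 he)
      exact ⟨⟨hp, hp⟩, rfl⟩
  rw [himg, Finset.sum_image (fun p _ q _ h => (Prod.ext_iff.1 h).1)]
  exact Finset.sum_congr rfl fun p _ => by rw [sq]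

lemma empirical_var_identity {α : Type*} (s : Finset α) (A : α → ℝ) (L B : ℝ)
    (hL : L ≠ 0) (hB : (s.card : ℝ) = B) (hB0 : B ≠ 0) :
    L * ((1 / B) * ∑ i ∈ s, (A i / L - (1 / B) * ∑ j ∈ s, A j / L) ^ 2)
      = (∑ i ∈ s, (A i) ^ 2) / (B * L) - (∑ i ∈ s, A i) ^ 2 / (B ^ 2 * L) := by
  have hmean : ∀ i ∈ s, (A i / L - (1 / B) * ∑ j ∈ s, A j / L) ^ 2
      = ((fun j => A j / L) i - (∑ j ∈ s, A j / L) / s.card) ^ 2 := by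
    intro i _
    rw [hB, one_div, inv_mul_eq_div]
  rw [Finset.sum_congr rfl hmean, sum_sq_sub_mean s (fun j => A j / L) (by rw [hB]; exact hB0),
    hB]
  have e1 : ∑ i ∈ s, (A i / L) ^ 2 = (∑ i ∈ s, (A i) ^ 2) / L ^ 2 := by
    rw [Finset.sum_div]
    exact Finset.sum_congr rfl fun i _ => by ring
  have e2 : ∑ j ∈ s, A j / L = (∑ j ∈ s, A j) / L := by rw [Finset.sum_div]
  rw [e1, e2]
  field_simp


lemma key_identity (ln lm bn bm : ℕ) (hln : 1 ≤ ln) (hlm : 1 ≤ lm) (hbn : 1 ≤ bn)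
    (hbm : 1 ≤ bm) (g : ℕ → ℕ → ℝ) :
    ((ln : ℝ) * (lm : ℝ)) * ((1 / ((bn : ℝ) * (bm : ℝ))) *
        ∑ h ∈ Finset.Icc 1 bn, ∑ k ∈ Finset.Icc 1 bm,
        (blkMean ln lm h k g - (1 / ((bn : ℝ) * (bm : ℝ))) * ∑ h' ∈ Finset.Icc 1 bn,
          ∑ k' ∈ Finset.Icc 1 bm, blkMean ln lm h' k' g) ^ 2)
    = (∑ p ∈ blkR ln lm bn bm, g p.1 p.2 ^ 2) / (((bn : ℝ) * bm) * ((ln : ℝ) * lm))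
      + (∑ x ∈ blkP ln lm bn bm, g x.1.1 x.1.2 * g x.2.1 x.2.2)
          / (((bn : ℝ) * bm) * ((ln : ℝ) * lm))
      - (∑ p ∈ blkR ln lm bn bm, g p.1 p.2) ^ 2 / (((bn : ℝ) * bm) ^ 2 * ((ln : ℝ) * lm)) := by
  set L : ℝ := (ln : ℝ) * lm with hLdef
  set B : ℝ := (bn : ℝ) * bm with hBdef
  have hL : L ≠ 0 := by
    have : (0:ℝ) < L := by
      apply mul_pos <;> exact_mod_cast Nat.lt_of_lt_of_le Nat.zero_lt_one ‹_›
    exact ne_of_gt this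
  have hB0 : B ≠ 0 := by
    have : (0:ℝ) < B := by
      apply mul_pos <;> exact_mod_cast Nat.lt_of_lt_of_le Nat.zero_lt_one ‹_›
    exact ne_of_gt this
  set s := Finset.Icc 1 bn ×ˢ Finset.Icc 1 bm with hsdef
  set A : ℕ × ℕ → ℝ := fun hk => ∑ p ∈ blkI ln lm hk.1 hk.2, g p.1 p.2 with hAdef
  have hcard : (s.card : ℝ) = B := by
    rw [hsdef, Finset.card_product, Nat.card_Icc, Nat.card_Icc]
    push_cast
    rw [hBdef]
  have hblk : ∀ h k, blkMean ln lm h k g = A (h, k) / L := by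
    intro h k
    rw [blkMean, hAdef]
    congr 1
    simp only []
    rw [show blkI ln lm (h, k).1 (h, k).2 = Finset.Ioc ((h - 1) * ln) (h * ln)
      ×ˢ Finset.Ioc ((k - 1) * lm) (k * lm) from rfl, Finset.sum_product]
  -- rewrite the double sums as sums over the product index set
  have havg : ∑ h' ∈ Finset.Icc 1 bn, ∑ k' ∈ Finset.Icc 1 bm, blkMean ln lm h' k' g
      = ∑ hk ∈ s, A hk / L := by
    rw [hsdef, Finset.sum_product]
    exact Finset.sum_congr rfl fun h _ => Finset.sum_congr rfl fun k _ => hblk h k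
  have houter : ∑ h ∈ Finset.Icc 1 bn, ∑ k ∈ Finset.Icc 1 bm,
      (blkMean ln lm h k g - (1 / B) * ∑ h' ∈ Finset.Icc 1 bn,
        ∑ k' ∈ Finset.Icc 1 bm, blkMean ln lm h' k' g) ^ 2
      = ∑ hk ∈ s, (A hk / L - (1 / B) * ∑ hk' ∈ s, A hk' / L) ^ 2 := by
    rw [hsdef, Finset.sum_product]
    exact Finset.sum_congr rfl fun h _ => Finset.sum_congr rfl fun k _ => by
      rw [hblk h k, havg]
  rw [houter, empirical_var_identity s A L B hL hcard hB0]
  -- now rewrite the sums of A and A²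
  have hsum : ∑ hk ∈ s, A hk = ∑ p ∈ blkR ln lm bn bm, g p.1 p.2 := by
    rw [hsdef, Finset.sum_product, hAdef]
    exact sum_blkI (fun p => g p.1 p.2) ln lm bn bm
  have hsumsq : ∑ hk ∈ s, (A hk) ^ 2
      = (∑ p ∈ blkR ln lm bn bm, g p.1 p.2 ^ 2)
        + ∑ x ∈ blkP ln lm bn bm, g x.1.1 x.1.2 * g x.2.1 x.2.2 := by
    have hsplit : ∀ hk ∈ s, (A hk) ^ 2
        = (∑ p ∈ blkI ln lm hk.1 hk.2, g p.1 p.2 ^ 2)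
          + ∑ x ∈ ((blkI ln lm hk.1 hk.2) ×ˢ (blkI ln lm hk.1 hk.2)).filter
              (fun x => x.1 ≠ x.2), g x.1.1 x.1.2 * g x.2.1 x.2.2 := by
      intro hk _
      rw [hAdef]
      exact sq_sum_split (blkI ln lm hk.1 hk.2) (fun p => g p.1 p.2)
    rw [Finset.sum_congr rfl hsplit, Finset.sum_add_distrib]
    congr 1
    · rw [hsdef, Finset.sum_product]
      exact sum_blkI (fun p => g p.1 p.2 ^ 2) ln lm bn bm
    · rw [sum_blkP (fun x => g x.1.1 x.1.2 * g x.2.1 x.2.2) ln lm bn bm, hsdef]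
  rw [hsum, hsumsq]
  ring


section Prob
variable {Ω : Type*} [MeasurableSpace Ω] {P : Measure Ω} [IsProbabilityMeasure P]
variable {ι : Type*} {f : ι → Ω → ℝ} {σ2 : ℝ}

section Indep
variable (hind : iIndepFun f P)
  (hm : ∀ i, Measurable (f i))
include hind hm

lemma indepFun_single_triple [DecidableEq ι] {x y z w : ι}
    (h1 : x ≠ y) (h2 : x ≠ z) (h3 : x ≠ w) :
    IndepFun (f x) (fun ω => f y ω * f z ω * f w ω) P := by
  have hd : Disjoint ({x} : Finset ι) ({y, z, w} : Finset ι) := by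
    simp [Finset.disjoint_left, h1, h2, h3]
  have h := hind.indepFun_finset {x} {y, z, w} hd hm
  have hx : x ∈ ({x} : Finset ι) := by simp
  have hy : y ∈ ({y, z, w} : Finset ι) := by simp
  have hz : z ∈ ({y, z, w} : Finset ι) := by simp
  have hw : w ∈ ({y, z, w} : Finset ι) := by simp
  have hg1 : Measurable (fun v : ({x} : Finset ι) → ℝ => v ⟨x, hx⟩) :=
    measurable_pi_apply _
  have hg2 : Measurable (fun v : ({y, z, w} : Finset ι) → ℝ =>
      v ⟨y, hy⟩ * v ⟨z, hz⟩ * v ⟨w, hw⟩) := by fun_prop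
  exact h.comp hg1 hg2

omit hm in
lemma indepFun_sq_sq {a b : ι} (hab : a ≠ b) :
    IndepFun (fun ω => f a ω ^ 2) (fun ω => f b ω ^ 2) P :=
  (hind.indepFun hab).comp (measurable_id.pow_const 2) (measurable_id.pow_const 2)

lemma indepFun_sq_mul [DecidableEq ι] {u v w : ι} (h1 : u ≠ v) (h2 : u ≠ w) :
    IndepFun (fun ω => f u ω ^ 2) (fun ω => f v ω * f w ω) P := by
  have hd : Disjoint ({u} : Finset ι) ({v, w} : Finset ι) := by
    simp [Finset.disjoint_left, h1, h2]
  have h := hind.indepFun_finset {u} {v, w} hd hm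
  have hu : u ∈ ({u} : Finset ι) := by simp
  have hv : v ∈ ({v, w} : Finset ι) := by simp
  have hw : w ∈ ({v, w} : Finset ι) := by simp
  have hg1 : Measurable (fun t : ({u} : Finset ι) → ℝ => t ⟨u, hu⟩ ^ 2) := by fun_prop
  have hg2 : Measurable (fun t : ({v, w} : Finset ι) → ℝ => t ⟨v, hv⟩ * t ⟨w, hw⟩) := by
    fun_prop
  exact h.comp hg1 hg2

lemma indepFun_mul_mul [DecidableEq ι] {a b c d : ι} (h1 : a ≠ c) (h2 : a ≠ d)
    (h3 : b ≠ c) (h4 : b ≠ d) :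
    IndepFun (fun ω => f a ω * f b ω) (fun ω => f c ω * f d ω) P := by
  have hd : Disjoint ({a, b} : Finset ι) ({c, d} : Finset ι) := by
    simp only [Finset.disjoint_left, Finset.mem_insert, Finset.mem_singleton]
    rintro x (rfl | rfl) <;> rintro (rfl | rfl) <;> simp_all
  have h := hind.indepFun_finset {a, b} {c, d} hd hm
  have ha : a ∈ ({a, b} : Finset ι) := by simp
  have hb : b ∈ ({a, b} : Finset ι) := by simp
  have hc : c ∈ ({c, d} : Finset ι) := by simp
  have hd' : d ∈ ({c, d} : Finset ι) := by simp
  have hg1 : Measurable (fun t : ({a, b} : Finset ι) → ℝ => t ⟨a, ha⟩ * t ⟨b, hb⟩) := by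
    fun_prop
  have hg2 : Measurable (fun t : ({c, d} : Finset ι) → ℝ => t ⟨c, hc⟩ * t ⟨d, hd'⟩) := by
    fun_prop
  exact h.comp hg1 hg2

end Indep


section Moments
variable [DecidableEq ι]
  (hind : iIndepFun f P)
  (hm : ∀ i, Measurable (f i)) (hL2 : ∀ i, MemLp (f i) 2 P)
  (h0 : ∀ i, ∫ ω, f i ω ∂P = 0) (h2 : ∀ i, ∫ ω, (f i ω) ^ 2 ∂P = σ2)
include hind hm hL2

omit hind hm in
lemma int_f (i : ι) : Integrable (f i) P := (hL2 i).integrable one_le_two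

omit hind hm in
lemma int_sq (i : ι) : Integrable (fun ω => f i ω ^ 2) P := (hL2 i).integrable_sq

lemma int_mul {u v : ι} (huv : u ≠ v) : Integrable (fun ω => f u ω * f v ω) P :=
  (hind.indepFun huv).integrable_mul (int_f hL2 u) (int_f hL2 v)

lemma quad_integrable {a b c d : ι} (hab : a ≠ b) (hcd : c ≠ d) :
    Integrable (fun ω => f a ω * f b ω * f c ω * f d ω) P := by
  by_cases hac : a = c
  · subst hac
    by_cases hbd : b = d
    · subst hbd
      have h := ((indepFun_sq_sq hind hab).integrable_mul (int_sq hL2 a) (int_sq hL2 b))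
      exact h.congr (Filter.Eventually.of_forall fun ω => by simp only [Pi.mul_apply]; ring)
    · -- a = c, b ≠ d, b ≠ a, d ≠ a
      have hda : d ≠ a := fun h => hcd h.symm
      have h := ((indepFun_sq_mul hind hm hab (Ne.symm hda)).integrable_mul
        (int_sq hL2 a) (int_mul hind hm hL2 hbd))
      exact h.congr (Filter.Eventually.of_forall fun ω => by simp only [Pi.mul_apply]; ring)
  · by_cases had : a = d
    · subst had
      by_cases hbc : b = c
      · subst hbc
        have h := ((indepFun_sq_sq hind hab).integrable_mul (int_sq hL2 a) (int_sq hL2 b))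
        exact h.congr (Filter.Eventually.of_forall fun ω => by simp only [Pi.mul_apply]; ring)
      · have hca : c ≠ a := hcd
        have h := ((indepFun_sq_mul hind hm hab (Ne.symm hca)).integrable_mul
          (int_sq hL2 a) (int_mul hind hm hL2 hbc))
        exact h.congr (Filter.Eventually.of_forall fun ω => by simp only [Pi.mul_apply]; ring)
    · by_cases hbc : b = c
      · subst hbc
        have hbd : b ≠ d := hcd
        have h := ((indepFun_sq_mul hind hm (Ne.symm hab) hcd).integrable_mul
          (int_sq hL2 b) (int_mul hind hm hL2 had))
        exact h.congr (Filter.Eventually.of_forall fun ω => by simp only [Pi.mul_apply]; ring)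
      · by_cases hbd : b = d
        · subst hbd
          have h := ((indepFun_sq_mul hind hm (Ne.symm hab) (Ne.symm hcd)).integrable_mul
            (int_sq hL2 b) (int_mul hind hm hL2 hac))
          exact h.congr (Filter.Eventually.of_forall fun ω => by simp only [Pi.mul_apply]; ring)
        · have h := ((indepFun_mul_mul hind hm hac had hbc hbd).integrable_mul
            (int_mul hind hm hL2 hab) (int_mul hind hm hL2 hcd))
          exact h.congr (Filter.Eventually.of_forall fun ω => by simp only [Pi.mul_apply]; ring)

include h0 h2 in
lemma quad_integral {a b c d : ι} (hab : a ≠ b) (hcd : c ≠ d) :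
    ∫ ω, f a ω * f b ω * f c ω * f d ω ∂P
      = if (a = c ∧ b = d) ∨ (a = d ∧ b = c) then σ2 * σ2 else 0 := by
  split_ifs with hmatch
  · rcases hmatch with ⟨rfl, rfl⟩ | ⟨rfl, rfl⟩
    · rw [show (fun ω => f a ω * f b ω * f a ω * f b ω)
        = fun ω => f a ω ^ 2 * f b ω ^ 2 from funext fun ω => by ring]
      rw [(indepFun_sq_sq hind hab).integral_fun_mul_eq_mul_integral
        ((hm a).pow_const 2).aestronglyMeasurable ((hm b).pow_const 2).aestronglyMeasurable,
        h2 a, h2 b]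
    · rw [show (fun ω => f a ω * f b ω * f b ω * f a ω)
        = fun ω => f a ω ^ 2 * f b ω ^ 2 from funext fun ω => by ring]
      rw [(indepFun_sq_sq hind hab).integral_fun_mul_eq_mul_integral
        ((hm a).pow_const 2).aestronglyMeasurable ((hm b).pow_const 2).aestronglyMeasurable,
        h2 a, h2 b]
  · push_neg at hmatch
    obtain ⟨hm1, hm2⟩ := hmatch
    have key : (a ≠ c ∧ a ≠ d) ∨ (b ≠ c ∧ b ≠ d) := by
      by_cases hac : a = c
      · subst hac
        exact Or.inr ⟨fun h => hab h.symm, hm1 rfl⟩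
      · by_cases had : a = d
        · subst had
          exact Or.inr ⟨hm2 rfl, fun h => hab h.symm⟩
        · exact Or.inl ⟨hac, had⟩
    rcases key with ⟨h1, h3⟩ | ⟨h1, h3⟩
    · rw [show (fun ω => f a ω * f b ω * f c ω * f d ω)
        = fun ω => f a ω * (f b ω * f c ω * f d ω) from funext fun ω => by ring]
      rw [(indepFun_single_triple hind hm hab h1 h3).integral_fun_mul_eq_mul_integral
        (hm a).aestronglyMeasurable
        (((hm b).mul (hm c)).mul (hm d)).aestronglyMeasurable, h0 a, zero_mul]
    · rw [show (fun ω => f a ω * f b ω * f c ω * f d ω)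
        = fun ω => f b ω * (f a ω * f c ω * f d ω) from funext fun ω => by ring]
      rw [(indepFun_single_triple hind hm (Ne.symm hab) h1 h3).integral_fun_mul_eq_mul_integral
        (hm b).aestronglyMeasurable
        (((hm a).mul (hm c)).mul (hm d)).aestronglyMeasurable, h0 b, zero_mul]

end Moments

/-- Markov's inequality in the convenient form. -/
lemma meas_ge_le_ofReal {W : Ω → ℝ} (hW : Integrable W P) (hWnn : 0 ≤ᵐ[P] W) {c : ℝ}
    (hc : 0 < c) : P {ω | c ≤ W ω} ≤ ENNReal.ofReal ((∫ ω, W ω ∂P) / c) := by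
  have h := mul_meas_ge_le_integral_of_nonneg hWnn hW c
  have hfin : P {ω | c ≤ W ω} ≠ ⊤ := measure_ne_top _ _
  rw [← ENNReal.ofReal_toReal hfin]
  apply ENNReal.ofReal_le_ofReal
  rw [le_div_iff₀ hc]
  rw [measureReal_def] at h
  linarith [h]

/-- Transfer of integrals of compositions along equality of laws. -/
lemma integral_comp_eq {X Z : Ω → ℝ} (hX : Measurable X) (hZ : Measurable Z)
    (hid : Measure.map X P = Measure.map Z P) (g : ℝ → ℝ) (hg : Measurable g) :
    ∫ ω, g (X ω) ∂P = ∫ ω, g (Z ω) ∂P := by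
  rw [← integral_map hX.aemeasurable hg.aestronglyMeasurable, hid,
    integral_map hZ.aemeasurable hg.aestronglyMeasurable]


section Moments2
variable [DecidableEq ι]
  (hind : iIndepFun f P)
  (hm : ∀ i, Measurable (f i)) (hL2 : ∀ i, MemLp (f i) 2 P)
  (h0 : ∀ i, ∫ ω, f i ω ∂P = 0) (h2 : ∀ i, ∫ ω, (f i ω) ^ 2 ∂P = σ2)
include hind hm hL2

include h0 h2 in
/-- Second moment of a sum of independent centered variables. -/
lemma sum_sq_integral (S : Finset ι) :
    ∫ ω, (∑ p ∈ S, f p ω) ^ 2 ∂P = S.card * σ2 := by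
  have hvari : ∀ i, variance (f i) P = σ2 := by
    intro i
    rw [variance_eq_sub (hL2 i)]
    have e1 : (f i ^ 2 : Ω → ℝ) = fun ω => f i ω ^ 2 := rfl
    have e2 : P[f i] = ∫ ω, f i ω ∂P := rfl
    rw [e1, e2, h0 i, h2 i]
    simp
  have hpair : Set.Pairwise ↑S fun i j => IndepFun (f i) (f j) P :=
    fun i _ j _ hij => hind.indepFun hij
  have hvs : variance (∑ p ∈ S, f p) P = S.card * σ2 := by
    rw [IndepFun.variance_sum (fun i _ => hL2 i) hpair]
    simp [hvari, Finset.sum_const, nsmul_eq_mul]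
  have hMsum : MemLp (∑ p ∈ S, f p) 2 P := memLp_finset_sum' S fun i _ => hL2 i
  have hEsum : P[∑ p ∈ S, f p] = 0 := by
    have : P[∑ p ∈ S, f p] = ∫ ω, ∑ p ∈ S, f p ω ∂P := by
      congr 1; funext ω; simp [Finset.sum_apply]
    rw [this, integral_finset_sum S fun i _ => (hL2 i).integrable one_le_two]
    simp [h0]
  have hdef := variance_eq_sub hMsum
  have e3 : P[(∑ p ∈ S, f p) ^ 2] = ∫ ω, (∑ p ∈ S, f p ω) ^ 2 ∂P := by
    congr 1; funext ω; simp [Finset.sum_apply]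
  rw [hEsum, e3] at hdef
  rw [← hvs, hdef]; ring

include h0 h2 in
/-- The off-diagonal cross term: integrability and second-moment bound. -/
lemma cross_bound (hσ2 : 0 ≤ σ2) (ps : Finset (ι × ι)) (hps : ∀ x ∈ ps, x.1 ≠ x.2) :
    Integrable (fun ω => (∑ x ∈ ps, f x.1 ω * f x.2 ω) ^ 2) P ∧
      ∫ ω, (∑ x ∈ ps, f x.1 ω * f x.2 ω) ^ 2 ∂P ≤ 2 * ps.card * (σ2 * σ2) := by
  have hrw : (fun ω => (∑ x ∈ ps, f x.1 ω * f x.2 ω) ^ 2)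
      = fun ω => ∑ x ∈ ps, ∑ y ∈ ps, f x.1 ω * f x.2 ω * f y.1 ω * f y.2 ω := by
    funext ω
    rw [sq, Finset.sum_mul_sum]
    exact Finset.sum_congr rfl fun x _ => Finset.sum_congr rfl fun y _ => by ring
  have hint : ∀ x ∈ ps, ∀ y ∈ ps,
      Integrable (fun ω => f x.1 ω * f x.2 ω * f y.1 ω * f y.2 ω) P :=
    fun x hx y hy => quad_integrable hind hm hL2 (hps x hx) (hps y hy)
  constructor
  · rw [hrw]
    exact integrable_finset_sum _ fun x hx => integrable_finset_sum _ fun y hy => hint x hx y hy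
  · rw [hrw]
    rw [integral_finset_sum _ fun x hx => integrable_finset_sum _ fun y hy => hint x hx y hy]
    have hxbound : ∀ x ∈ ps,
        ∫ ω, ∑ y ∈ ps, f x.1 ω * f x.2 ω * f y.1 ω * f y.2 ω ∂P ≤ σ2 * σ2 + σ2 * σ2 := by
      intro x hx
      rw [integral_finset_sum _ fun y hy => hint x hx y hy]
      have hterm : ∀ y ∈ ps, ∫ ω, f x.1 ω * f x.2 ω * f y.1 ω * f y.2 ω ∂P
          ≤ (if y = x then σ2 * σ2 else 0) + (if y = x.swap then σ2 * σ2 else 0) := by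
        intro y hy
        rw [quad_integral hind hm hL2 h0 h2 (hps x hx) (hps y hy)]
        by_cases hmatch : (x.1 = y.1 ∧ x.2 = y.2) ∨ (x.1 = y.2 ∧ x.2 = y.1)
        · rw [if_pos hmatch]
          rcases hmatch with ⟨e1, e2⟩ | ⟨e1, e2⟩
          · have : y = x := Prod.ext e1.symm e2.symm
            rw [if_pos this]
            have : (0:ℝ) ≤ if y = x.swap then σ2 * σ2 else 0 := by positivity
            linarith
          · have : y = x.swap := Prod.ext e2.symm e1.symm
            rw [if_pos this]
            have : (0:ℝ) ≤ if y = x then σ2 * σ2 else 0 := by positivity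
            linarith
        · rw [if_neg hmatch]
          have h1 : (0:ℝ) ≤ if y = x then σ2 * σ2 else 0 := by positivity
          have h2 : (0:ℝ) ≤ if y = x.swap then σ2 * σ2 else 0 := by positivity
          linarith
      calc ∑ y ∈ ps, ∫ ω, f x.1 ω * f x.2 ω * f y.1 ω * f y.2 ω ∂P
          ≤ ∑ y ∈ ps, ((if y = x then σ2 * σ2 else 0) + (if y = x.swap then σ2 * σ2 else 0)) :=
            Finset.sum_le_sum hterm
        _ = (∑ y ∈ ps, if y = x then σ2 * σ2 else 0)
            + ∑ y ∈ ps, if y = x.swap then σ2 * σ2 else 0 := Finset.sum_add_distrib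
        _ ≤ σ2 * σ2 + σ2 * σ2 := by
            gcongr <;>
            · rw [Finset.sum_ite_eq' ps _ fun _ => σ2 * σ2]
              split_ifs <;> first
              | exact le_refl _
              | positivity
    calc ∑ x ∈ ps, ∫ ω, ∑ y ∈ ps, f x.1 ω * f x.2 ω * f y.1 ω * f y.2 ω ∂P
        ≤ ∑ _x ∈ ps, (σ2 * σ2 + σ2 * σ2) := Finset.sum_le_sum hxbound
      _ = 2 * ps.card * (σ2 * σ2) := by rw [Finset.sum_const, nsmul_eq_mul]; ring

end Moments2
end Prob

lemma blkLen_tendsto {s : ℝ} (hs : 0 < s) : Tendsto (blkLen s) atTop atTop :=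
  tendsto_nat_floor_atTop.comp
    ((tendsto_rpow_atTop hs).comp tendsto_natCast_atTop_atTop)

lemma blkCnt_tendsto {s : ℝ} (hs0 : 0 < s) (hs1 : s < 1) :
    Tendsto (blkCnt s) atTop atTop := by
  rw [tendsto_atTop]
  intro A
  have h1 : ∀ᶠ n : ℕ in atTop, 1 ≤ blkLen s n := (blkLen_tendsto hs0).eventually_ge_atTop 1
  have h2 : Tendsto (fun n : ℕ => (n : ℝ) ^ (1 - s)) atTop atTop :=
    (tendsto_rpow_atTop (by linarith)).comp tendsto_natCast_atTop_atTop
  have h3 : ∀ᶠ n : ℕ in atTop, (A : ℝ) ≤ (n : ℝ) ^ (1 - s) := h2.eventually_ge_atTop _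
  filter_upwards [h1, h3, eventually_ge_atTop 1] with n hl hA hn
  rw [blkCnt, Nat.le_div_iff_mul_le (by omega : 0 < blkLen s n)]
  have hfl : (blkLen s n : ℝ) ≤ (n : ℝ) ^ s :=
    Nat.floor_le (Real.rpow_nonneg (Nat.cast_nonneg n) s)
  have hnpos : (0:ℝ) < n := by exact_mod_cast hn
  have key : (A : ℝ) * (n : ℝ) ^ s ≤ n := by
    calc (A : ℝ) * (n : ℝ) ^ s ≤ (n : ℝ) ^ (1 - s) * (n : ℝ) ^ s :=
          mul_le_mul_of_nonneg_right hA (Real.rpow_nonneg hnpos.le s)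
      _ = (n : ℝ) ^ (1 : ℝ) := by rw [← Real.rpow_add hnpos]; ring_nf
      _ = n := Real.rpow_one _
  have : (A : ℝ) * (blkLen s n : ℝ) ≤ n :=
    le_trans (mul_le_mul_of_nonneg_left hfl (Nat.cast_nonneg A)) key
  exact_mod_cast this


section Prob2
variable {Ω : Type*} [MeasurableSpace Ω] {P : Measure Ω} [IsProbabilityMeasure P]
variable {f : ℕ × ℕ → Ω → ℝ} {σ2 : ℝ}

lemma trunc_integral_tendsto {X : Ω → ℝ} (hX : Measurable X)
    (hX2 : Integrable (fun ω => X ω ^ 2) P) :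
    Tendsto (fun K : ℕ => ∫ ω, min (X ω ^ 2) K ∂P) atTop (𝓝 (∫ ω, X ω ^ 2 ∂P)) := by
  apply tendsto_integral_of_dominated_convergence (fun ω => X ω ^ 2)
  · exact fun K => (((hX.pow_const 2).min measurable_const).aestronglyMeasurable)
  · exact hX2
  · intro K
    filter_upwards with ω
    rw [Real.norm_eq_abs, abs_of_nonneg (le_min (sq_nonneg _) (Nat.cast_nonneg K))]
    exact min_le_left _ _
  · filter_upwards with ω
    have : ∀ᶠ K : ℕ in atTop, min (X ω ^ 2) (K : ℝ) = X ω ^ 2 := by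
      filter_upwards [eventually_ge_atTop ⌈X ω ^ 2⌉₊] with K hK
      exact min_eq_left (le_trans (Nat.le_ceil _) (by exact_mod_cast hK))
    exact Tendsto.congr' (this.mono fun K hK => hK.symm) tendsto_const_nhds


/-- The central quantitative bound for a single configuration of block parameters. -/
lemma main_bound
    (hind : iIndepFun f P)
    (hm : ∀ p, Measurable (f p)) (hL2 : ∀ p, MemLp (f p) 2 P)
    (h0 : ∀ p, ∫ ω, f p ω ∂P = 0) (h2 : ∀ p, ∫ ω, (f p ω) ^ 2 ∂P = σ2)
    (hid : ∀ p : ℕ × ℕ, Measure.map (f p) P = Measure.map (f (1, 1)) P)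
    (hσ2 : 0 ≤ σ2) {K : ℝ} (hK : 0 ≤ K) {ε : ℝ} (hε : 0 < ε)
    (hδsmall : σ2 - ∫ ω, min (f (1, 1) ω ^ 2) K ∂P ≤ ε / 12)
    (ln lm bn bm : ℕ) (hln : 1 ≤ ln) (hlm : 1 ≤ lm) (hbn : 1 ≤ bn) (hbm : 1 ≤ bm) :
    P {ω | ε ≤ |((ln : ℝ) * (lm : ℝ)) * ((1 / ((bn : ℝ) * (bm : ℝ))) *
        ∑ h ∈ Finset.Icc 1 bn, ∑ k ∈ Finset.Icc 1 bm,
          (blkMean ln lm h k (fun i j => f (i, j) ω)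
            - (1 / ((bn : ℝ) * (bm : ℝ))) * ∑ h' ∈ Finset.Icc 1 bn,
                ∑ k' ∈ Finset.Icc 1 bm, blkMean ln lm h' k' (fun i j => f (i, j) ω)) ^ 2)
        - σ2|}
    ≤ ENNReal.ofReal (K ^ 2 / (((bn : ℝ) * bm) * (ε / 6) ^ 2))
      + ENNReal.ofReal ((σ2 - ∫ ω, min (f (1, 1) ω ^ 2) K ∂P) / (ε / 12))
      + ENNReal.ofReal ((2 * σ2 * σ2 / ((bn : ℝ) * bm)) / (ε / 3) ^ 2)
      + ENNReal.ofReal ((σ2 / ((bn : ℝ) * bm)) / (ε / 3)) := by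
  classical
  set B : ℝ := (bn : ℝ) * bm with hBdef
  set L : ℝ := (ln : ℝ) * lm with hLdef
  have hBpos : 0 < B := by
    apply mul_pos <;> exact_mod_cast Nat.lt_of_lt_of_le Nat.zero_lt_one ‹_›
  have hLpos : 0 < L := by
    apply mul_pos <;> exact_mod_cast Nat.lt_of_lt_of_le Nat.zero_lt_one ‹_›
  have hL1 : 1 ≤ L := by
    rw [hLdef]
    have h1 : (1:ℝ) ≤ ln := by exact_mod_cast hln
    have h2 : (1:ℝ) ≤ lm := by exact_mod_cast hlm
    nlinarith
  set NN : ℝ := B * L with hNNdef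
  have hNNpos : 0 < NN := mul_pos hBpos hLpos
  set R : Finset (ℕ × ℕ) := blkR ln lm bn bm with hRdef
  set PS : Finset ((ℕ × ℕ) × (ℕ × ℕ)) := blkP ln lm bn bm with hPSdef
  have hcardR : (R.card : ℝ) = NN := by
    rw [hRdef, card_blkR]
    push_cast
    rw [hNNdef, hBdef, hLdef]
    ring
  -- truncated variables
  set Z : ℕ × ℕ → Ω → ℝ := fun p ω => min (f p ω ^ 2) K with hZdef
  have hZmeas : ∀ p, Measurable (Z p) := fun p => ((hm p).pow_const 2).min measurable_const
  have hZ0 : ∀ p ω, 0 ≤ Z p ω := fun p ω => le_min (sq_nonneg _) hK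
  have hZK : ∀ p ω, Z p ω ≤ K := fun p ω => min_le_right _ _
  have hZle : ∀ p ω, Z p ω ≤ f p ω ^ 2 := fun p ω => min_le_left _ _
  have hMemZ : ∀ p, MemLp (Z p) 2 P := by
    intro p
    refine MemLp.mono_exponent ?_ le_top
    apply memLp_top_of_bound (hZmeas p).aestronglyMeasurable K
    filter_upwards with ω
    rw [Real.norm_eq_abs, abs_of_nonneg (hZ0 p ω)]
    exact hZK p ω
  have hZint : ∀ p, Integrable (Z p) P := fun p => (hMemZ p).integrable one_le_two
  set mZ : ℝ := ∫ ω, min (f (1, 1) ω ^ 2) K ∂P with hmZdef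
  set δ : ℝ := σ2 - mZ with hδdef
  have hZmean : ∀ p, ∫ ω, Z p ω ∂P = mZ := by
    intro p
    exact integral_comp_eq (hm p) (hm (1, 1)) (hid p) (fun x => min (x ^ 2) K) (by fun_prop)
  have hδ0 : 0 ≤ δ := by
    rw [hδdef, sub_nonneg, hmZdef, ← h2 (1, 1)]
    apply integral_mono (hZint (1, 1)) (hL2 (1, 1)).integrable_sq
    intro ω
    exact min_le_left _ _
  -- per-summand remainder integral
  have hRemint : ∀ p, Integrable (fun ω => f p ω ^ 2 - Z p ω) P :=
    fun p => (hL2 p).integrable_sq.sub (hZint p)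
  have hRemmean : ∀ p, ∫ ω, (f p ω ^ 2 - Z p ω) ∂P = δ := by
    intro p
    rw [integral_sub (hL2 p).integrable_sq (hZint p), h2 p, hZmean p]
  -- main random variables
  set AZ : Ω → ℝ := fun ω => (1 / NN) * ∑ p ∈ R, Z p ω with hAZdef
  set ARem : Ω → ℝ := fun ω => (1 / NN) * ∑ p ∈ R, (f p ω ^ 2 - Z p ω) with hARemdef
  set CC : Ω → ℝ := fun ω => (1 / NN) * ∑ x ∈ PS, f x.1 ω * f x.2 ω with hCCdef
  set EE : Ω → ℝ := fun ω => (∑ p ∈ R, f p ω) ^ 2 / (B ^ 2 * L) with hEEdef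
  have hARem0 : ∀ ω, 0 ≤ ARem ω := by
    intro ω
    rw [hARemdef]
    apply mul_nonneg (by positivity)
    exact Finset.sum_nonneg fun p _ => sub_nonneg.2 (hZle p ω)
  have hEE0 : ∀ ω, 0 ≤ EE ω := fun ω => by rw [hEEdef]; positivity
  -- the decomposition
  have hDecomp : ∀ ω, ((ln : ℝ) * (lm : ℝ)) * ((1 / ((bn : ℝ) * (bm : ℝ))) *
      ∑ h ∈ Finset.Icc 1 bn, ∑ k ∈ Finset.Icc 1 bm,
        (blkMean ln lm h k (fun i j => f (i, j) ω)
          - (1 / ((bn : ℝ) * (bm : ℝ))) * ∑ h' ∈ Finset.Icc 1 bn,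
              ∑ k' ∈ Finset.Icc 1 bm, blkMean ln lm h' k' (fun i j => f (i, j) ω)) ^ 2)
      - σ2
      = ((AZ ω - mZ) + (ARem ω - δ)) + CC ω - EE ω := by
    intro ω
    rw [key_identity ln lm bn bm hln hlm hbn hbm (fun i j => f (i, j) ω)]
    have hsplit : ∑ p ∈ blkR ln lm bn bm, f (p.1, p.2) ω ^ 2
        = (∑ p ∈ R, Z p ω) + ∑ p ∈ R, (f p ω ^ 2 - Z p ω) := by
      rw [← Finset.sum_add_distrib, ← hRdef]
      exact Finset.sum_congr rfl fun p _ => by ring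
    rw [hsplit]
    rw [hAZdef, hARemdef, hCCdef, hEEdef, hδdef]
    have e1 : ∑ x ∈ blkP ln lm bn bm, f (x.1.1, x.1.2) ω * f (x.2.1, x.2.2) ω
        = ∑ x ∈ PS, f x.1 ω * f x.2 ω := by rw [hPSdef]
    have e2 : ∑ p ∈ blkR ln lm bn bm, f (p.1, p.2) ω = ∑ p ∈ R, f p ω := by rw [hRdef]
    rw [e1, e2]
    rw [hNNdef, hBdef, hLdef]
    field_simp
    ring
  -- independence of the truncated field
  have hindZ : iIndepFun Z P :=
    hind.comp (fun _ x => min (x ^ 2) K) (fun _ => by fun_prop)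
  have hvZp : ∀ p, variance (Z p) P = variance (Z (1, 1)) P := by
    intro p
    rw [variance_eq_sub (hMemZ p), variance_eq_sub (hMemZ (1, 1))]
    have e1 : ∫ ω, (Z p ω) ^ 2 ∂P = ∫ ω, (Z (1, 1) ω) ^ 2 ∂P :=
      integral_comp_eq (hm p) (hm (1, 1)) (hid p) (fun x => (min (x ^ 2) K) ^ 2) (by fun_prop)
    rw [show P[Z p ^ 2] = ∫ ω, (Z p ω) ^ 2 ∂P from rfl,
      show P[Z (1, 1) ^ 2] = ∫ ω, (Z (1, 1) ω) ^ 2 ∂P from rfl,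
      show P[Z p] = ∫ ω, Z p ω ∂P from rfl,
      show P[Z (1, 1)] = ∫ ω, Z (1, 1) ω ∂P from rfl, e1, hZmean p, hZmean (1, 1)]
  have hVarZK : variance (Z (1, 1)) P ≤ K ^ 2 := by
    refine le_trans (variance_le_expectation_sq (hZmeas (1, 1)).aestronglyMeasurable) ?_
    have hb : ∀ ω, (Z (1, 1) ω) ^ 2 ≤ K ^ 2 :=
      fun ω => pow_le_pow_left₀ (hZ0 _ _) (hZK _ _) 2
    calc P[Z (1, 1) ^ 2] = ∫ ω, (Z (1, 1) ω) ^ 2 ∂P := rfl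
      _ ≤ ∫ _ω, K ^ 2 ∂P := integral_mono (hMemZ _).integrable_sq (integrable_const _) hb
      _ = K ^ 2 := by simp
  have hVar0 : 0 ≤ variance (Z (1, 1)) P := variance_nonneg _ _
  -- Chebyshev for AZ
  have hvarsum : variance (fun ω => ∑ p ∈ R, Z p ω) P = R.card * variance (Z (1, 1)) P := by
    have he : (fun ω => ∑ p ∈ R, Z p ω) = ∑ p ∈ R, Z p := by
      funext ω; rw [Finset.sum_apply]
    rw [he, IndepFun.variance_sum (fun p _ => hMemZ p)
      (fun p _ q _ hpq => hindZ.indepFun hpq)]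
    rw [Finset.sum_congr rfl fun p _ => hvZp p, Finset.sum_const, nsmul_eq_mul]
  have hvarAZ : variance AZ P = (1 / NN) ^ 2 * (R.card * variance (Z (1, 1)) P) := by
    rw [show AZ = fun ω => (1 / NN) * (fun ω' => ∑ p ∈ R, Z p ω') ω from rfl,
      variance_const_mul, hvarsum]
  have hEAZ : P[AZ] = mZ := by
    have h1 : P[AZ] = (1 / NN) * ∑ p ∈ R, ∫ ω, Z p ω ∂P := by
      rw [show P[AZ] = ∫ ω, (1 / NN) * ∑ p ∈ R, Z p ω ∂P from rfl, integral_const_mul,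
        integral_finset_sum R fun p _ => hZint p]
    rw [h1, Finset.sum_congr rfl fun p _ => hZmean p, Finset.sum_const, nsmul_eq_mul, hcardR]
    field_simp
  have hMAZ : MemLp AZ 2 P := by
    have hs : MemLp (∑ p ∈ R, Z p) 2 P := memLp_finset_sum' R fun p _ => hMemZ p
    have h' := hs.const_mul (1 / NN)
    have he : AZ = fun ω => (1 / NN) * (∑ p ∈ R, Z p) ω := by
      funext ω; rw [Finset.sum_apply]
    rw [he]; exact h'
  have boundA : P {ω | ε / 6 ≤ |AZ ω - mZ|}
      ≤ ENNReal.ofReal (K ^ 2 / (B * (ε / 6) ^ 2)) := by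
    have h := meas_ge_le_variance_div_sq (μ := P) hMAZ (c := ε / 6) (by positivity)
    rw [hEAZ] at h
    refine le_trans h (ENNReal.ofReal_le_ofReal ?_)
    rw [hvarAZ, hcardR]
    have e : (1 / NN) ^ 2 * (NN * variance (Z (1, 1)) P) = variance (Z (1, 1)) P / NN := by
      field_simp
    rw [e, div_div]
    apply div_le_div₀ (by positivity) hVarZK (by positivity)
    exact mul_le_mul_of_nonneg_right (le_mul_of_one_le_right hBpos.le hL1) (by positivity)
  -- Markov for ARem
  have hARemInt : Integrable ARem P := by
    have := (integrable_finset_sum R fun p _ => hRemint p).const_mul (1 / NN)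
    exact this.congr (Filter.Eventually.of_forall fun ω => rfl)
  have hARemMean : ∫ ω, ARem ω ∂P = δ := by
    have h1 : ∫ ω, ARem ω ∂P = (1 / NN) * ∑ p ∈ R, ∫ ω, (f p ω ^ 2 - Z p ω) ∂P := by
      rw [show (fun ω => ARem ω) = fun ω => (1 / NN) * ∑ p ∈ R, (f p ω ^ 2 - Z p ω) from rfl,
        integral_const_mul, integral_finset_sum R fun p _ => hRemint p]
    rw [h1, Finset.sum_congr rfl fun p _ => hRemmean p, Finset.sum_const, nsmul_eq_mul, hcardR]
    field_simp
  have boundB : P {ω | ε / 12 ≤ ARem ω} ≤ ENNReal.ofReal (δ / (ε / 12)) := by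
    have h := meas_ge_le_ofReal hARemInt (Filter.Eventually.of_forall hARem0)
      (show (0:ℝ) < ε / 12 by positivity)
    rwa [hARemMean] at h
  -- Markov for CC²
  have hcb := cross_bound hind hm hL2 h0 h2 hσ2 PS (fun x hx => mem_blkP_ne (hPSdef ▸ hx))
  have hCCsq : ∀ ω, CC ω ^ 2 = (1 / NN) ^ 2 * (∑ x ∈ PS, f x.1 ω * f x.2 ω) ^ 2 :=
    fun ω => by rw [hCCdef]; ring
  have hCCsqInt : Integrable (fun ω => CC ω ^ 2) P := by
    have := hcb.1.const_mul ((1 / NN) ^ 2)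
    exact this.congr (Filter.Eventually.of_forall fun ω => (hCCsq ω).symm)
  have hcardPS : (PS.card : ℝ) ≤ B * L ^ 2 := by
    have h := card_blkP_le ln lm bn bm
    rw [hPSdef]
    calc ((blkP ln lm bn bm).card : ℝ) ≤ ((bn * bm * (ln * lm) ^ 2 : ℕ) : ℝ) := by
          exact_mod_cast h
      _ = B * L ^ 2 := by push_cast; rw [hBdef, hLdef]; try ring
  have hCCmean : ∫ ω, CC ω ^ 2 ∂P ≤ 2 * σ2 * σ2 / B := by
    have h1 : ∫ ω, CC ω ^ 2 ∂P
        = (1 / NN) ^ 2 * ∫ ω, (∑ x ∈ PS, f x.1 ω * f x.2 ω) ^ 2 ∂P := by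
      rw [integral_congr_ae (Filter.Eventually.of_forall hCCsq), integral_const_mul]
    rw [h1]
    calc (1 / NN) ^ 2 * ∫ ω, (∑ x ∈ PS, f x.1 ω * f x.2 ω) ^ 2 ∂P
        ≤ (1 / NN) ^ 2 * (2 * PS.card * (σ2 * σ2)) :=
          mul_le_mul_of_nonneg_left hcb.2 (by positivity)
      _ ≤ (1 / NN) ^ 2 * (2 * (B * L ^ 2) * (σ2 * σ2)) := by
          apply mul_le_mul_of_nonneg_left _ (by positivity)
          have : (0:ℝ) ≤ σ2 * σ2 := by positivity
          nlinarith [hcardPS]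
      _ = 2 * σ2 * σ2 / B := by
          rw [hNNdef]
          field_simp
  have boundC : P {ω | (ε / 3) ^ 2 ≤ CC ω ^ 2}
      ≤ ENNReal.ofReal ((2 * σ2 * σ2 / B) / (ε / 3) ^ 2) := by
    have h := meas_ge_le_ofReal hCCsqInt (Filter.Eventually.of_forall fun ω => sq_nonneg _)
      (show (0:ℝ) < (ε / 3) ^ 2 by positivity)
    refine le_trans h (ENNReal.ofReal_le_ofReal ?_)
    gcongr
    all_goals exact hCCmean
  -- Markov for EE
  have hsmem : MemLp (∑ p ∈ R, f p) 2 P := memLp_finset_sum' R fun p _ => hL2 p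
  have heEE : EE = fun ω => (1 / (B ^ 2 * L)) * ((∑ p ∈ R, f p) ω) ^ 2 := by
    funext ω
    rw [hEEdef, Finset.sum_apply]
    ring
  have hEEInt : Integrable EE P := by
    rw [heEE]
    exact (hsmem.integrable_sq).const_mul _
  have hEEmean : ∫ ω, EE ω ∂P = σ2 / B := by
    have h1 : ∫ ω, EE ω ∂P = (1 / (B ^ 2 * L)) * ∫ ω, (∑ p ∈ R, f p ω) ^ 2 ∂P := by
      rw [show (fun ω => EE ω) = fun ω => (1 / (B ^ 2 * L)) * (∑ p ∈ R, f p ω) ^ 2 by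
          funext ω; rw [hEEdef]; ring,
        integral_const_mul]
    rw [h1, sum_sq_integral hind hm hL2 h0 h2 R, hcardR, hNNdef]
    field_simp
  have boundD : P {ω | ε / 3 ≤ EE ω} ≤ ENNReal.ofReal ((σ2 / B) / (ε / 3)) := by
    have h := meas_ge_le_ofReal hEEInt (Filter.Eventually.of_forall hEE0)
      (show (0:ℝ) < ε / 3 by positivity)
    rwa [hEEmean] at h
  -- event inclusion
  have hsub : {ω | ε ≤ |((ln : ℝ) * (lm : ℝ)) * ((1 / ((bn : ℝ) * (bm : ℝ))) *
      ∑ h ∈ Finset.Icc 1 bn, ∑ k ∈ Finset.Icc 1 bm,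
        (blkMean ln lm h k (fun i j => f (i, j) ω)
          - (1 / ((bn : ℝ) * (bm : ℝ))) * ∑ h' ∈ Finset.Icc 1 bn,
              ∑ k' ∈ Finset.Icc 1 bm, blkMean ln lm h' k' (fun i j => f (i, j) ω)) ^ 2)
      - σ2|}
      ⊆ {ω | ε / 6 ≤ |AZ ω - mZ|} ∪ ({ω | ε / 12 ≤ ARem ω}
        ∪ ({ω | (ε / 3) ^ 2 ≤ CC ω ^ 2} ∪ {ω | ε / 3 ≤ EE ω})) := by
    intro ω hω
    simp only [Set.mem_setOf_eq] at hω
    rw [hDecomp ω] at hω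
    simp only [Set.mem_union, Set.mem_setOf_eq]
    by_contra hcon
    push_neg at hcon
    obtain ⟨hA, hB', hC, hD⟩ := hcon
    have hCC' : |CC ω| < ε / 3 := by
      nlinarith [abs_nonneg (CC ω), sq_abs (CC ω)]
    have h1 : |ARem ω - δ| ≤ ε / 12 := by
      rw [abs_le]
      constructor
      · linarith [hARem0 ω]
      · linarith [hδ0]
    have t1 := abs_add_le ((AZ ω - mZ) + (ARem ω - δ) + CC ω) (-(EE ω))
    rw [abs_neg] at t1
    have t2 := abs_add_le ((AZ ω - mZ) + (ARem ω - δ)) (CC ω)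
    have t3 := abs_add_le (AZ ω - mZ) (ARem ω - δ)
    have hEEabs : |EE ω| = EE ω := abs_of_nonneg (hEE0 ω)
    have hflip : (AZ ω - mZ) + (ARem ω - δ) + CC ω - EE ω
        = (AZ ω - mZ) + (ARem ω - δ) + CC ω + -(EE ω) := by ring
    rw [hflip] at hω
    linarith
  -- final assembly
  calc P {ω | ε ≤ |((ln : ℝ) * (lm : ℝ)) * ((1 / ((bn : ℝ) * (bm : ℝ))) *
      ∑ h ∈ Finset.Icc 1 bn, ∑ k ∈ Finset.Icc 1 bm,
        (blkMean ln lm h k (fun i j => f (i, j) ω)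
          - (1 / ((bn : ℝ) * (bm : ℝ))) * ∑ h' ∈ Finset.Icc 1 bn,
              ∑ k' ∈ Finset.Icc 1 bm, blkMean ln lm h' k' (fun i j => f (i, j) ω)) ^ 2)
      - σ2|}
      ≤ P ({ω | ε / 6 ≤ |AZ ω - mZ|} ∪ ({ω | ε / 12 ≤ ARem ω}
        ∪ ({ω | (ε / 3) ^ 2 ≤ CC ω ^ 2} ∪ {ω | ε / 3 ≤ EE ω}))) := measure_mono hsub
    _ ≤ P {ω | ε / 6 ≤ |AZ ω - mZ|} + (P {ω | ε / 12 ≤ ARem ω}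
        + (P {ω | (ε / 3) ^ 2 ≤ CC ω ^ 2} + P {ω | ε / 3 ≤ EE ω})) := by
        refine le_trans (measure_union_le _ _) ?_
        gcongr
        refine le_trans (measure_union_le _ _) ?_
        gcongr
        exact measure_union_le _ _
    _ ≤ ENNReal.ofReal (K ^ 2 / (B * (ε / 6) ^ 2)) + (ENNReal.ofReal (δ / (ε / 12))
        + (ENNReal.ofReal ((2 * σ2 * σ2 / B) / (ε / 3) ^ 2)
          + ENNReal.ofReal ((σ2 / B) / (ε / 3)))) := by
        gcongr
        all_goals first
        | exact boundA
        | exact boundB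
        | exact boundC
        | exact boundD
    _ = ENNReal.ofReal (K ^ 2 / (B * (ε / 6) ^ 2)) + ENNReal.ofReal (δ / (ε / 12))
        + ENNReal.ofReal ((2 * σ2 * σ2 / B) / (ε / 3) ^ 2)
        + ENNReal.ofReal ((σ2 / B) / (ε / 3)) := by
        rw [← add_assoc, ← add_assoc]


end Prob2
end NBMV

/-- the empirical variance of the noise block means converges to `0` in
probability; scaled by `l_n l_m` it converges in probability to `σ²`. -/
theorem noise_block_mean_variance
    {Ω : Type*} [MeasurableSpace Ω] (P : Measure Ω) [IsProbabilityMeasure P]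
    (s₁ s₂ : ℝ) (hs₁ : s₁ ∈ Set.Ioo (1/2 : ℝ) 1) (hs₂ : s₂ ∈ Set.Ioo (1/2 : ℝ) 1)
    (Y : ℕ → ℕ → Ω → ℝ) (hYmeas : ∀ i j, Measurable (Y i j))
    (hYindep : iIndepFun
      (fun p : ℕ × ℕ => Y p.1 p.2) P)
    (hYident : ∀ i j, Measure.map (Y i j) P = Measure.map (Y 1 1) P)
    (hmean : ∫ ω, Y 1 1 ω ∂P = 0)
    (σ : ℝ) (hσ : 0 < σ) (hvar : variance (Y 1 1) P = σ ^ 2) :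
    TendstoInProb P (atTop ×ˢ atTop)
      (fun nm ω =>
        (1 / ((blkCnt s₁ nm.1 : ℝ) * (blkCnt s₂ nm.2 : ℝ))) *
          ∑ h ∈ Finset.Icc 1 (blkCnt s₁ nm.1), ∑ k ∈ Finset.Icc 1 (blkCnt s₂ nm.2),
            (blkMean (blkLen s₁ nm.1) (blkLen s₂ nm.2) h k (fun i j => Y i j ω)
              - noiseBlkAvg s₁ s₂ Y nm ω) ^ 2)
      0 ∧
    TendstoInProb P (atTop ×ˢ atTop)
      (fun nm ω =>
        (blkLen s₁ nm.1 : ℝ) * (blkLen s₂ nm.2 : ℝ) *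
          ((1 / ((blkCnt s₁ nm.1 : ℝ) * (blkCnt s₂ nm.2 : ℝ))) *
            ∑ h ∈ Finset.Icc 1 (blkCnt s₁ nm.1), ∑ k ∈ Finset.Icc 1 (blkCnt s₂ nm.2),
              (blkMean (blkLen s₁ nm.1) (blkLen s₂ nm.2) h k (fun i j => Y i j ω)
                - noiseBlkAvg s₁ s₂ Y nm ω) ^ 2))
      (σ ^ 2) := by
  classical
  have hm : ∀ p : ℕ × ℕ, Measurable ((fun p : ℕ × ℕ => Y p.1 p.2) p) :=
    fun p => hYmeas p.1 p.2
  set f : ℕ × ℕ → Ω → ℝ := fun p => Y p.1 p.2 with hfdef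
  have hind : iIndepFun f P := hYindep
  have hidf : ∀ p : ℕ × ℕ, Measure.map (f p) P = Measure.map (f (1, 1)) P :=
    fun p => hYident p.1 p.2
  have hL2_11 : MemLp (Y 1 1) 2 P := by
    have hev : evariance (Y 1 1) P ≠ ⊤ := by
      intro h
      rw [variance, h, ENNReal.toReal_top] at hvar
      nlinarith [sq_nonneg σ]
    exact (evariance_lt_top_iff_memLp (hYmeas 1 1).aestronglyMeasurable).1
      (lt_top_iff_ne_top.2 hev)
  have hL2 : ∀ p : ℕ × ℕ, MemLp (f p) 2 P := by
    intro p
    have h1 : MemLp id 2 (Measure.map (f p) P) := by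
      rw [hidf p]
      exact (memLp_map_measure_iff aestronglyMeasurable_id (hm (1, 1)).aemeasurable).2 hL2_11
    exact (memLp_map_measure_iff aestronglyMeasurable_id (hm p).aemeasurable).1 h1
  have h0 : ∀ p : ℕ × ℕ, ∫ ω, f p ω ∂P = 0 := by
    intro p
    have h := NBMV.integral_comp_eq (P := P) (hm p) (hm (1, 1)) (hidf p)
      (fun x => x) measurable_id
    exact h.trans hmean
  have hsq11 : ∫ ω, (Y 1 1 ω) ^ 2 ∂P = σ ^ 2 := by
    have hv := variance_eq_sub hL2_11
    rw [hvar, show P[Y 1 1] = ∫ ω, Y 1 1 ω ∂P from rfl, hmean,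
      show P[Y 1 1 ^ 2] = ∫ ω, (Y 1 1 ω) ^ 2 ∂P from rfl] at hv
    linarith [hv]
  have h2 : ∀ p : ℕ × ℕ, ∫ ω, (f p ω) ^ 2 ∂P = σ ^ 2 := by
    intro p
    have h := NBMV.integral_comp_eq (P := P) (hm p) (hm (1, 1)) (hidf p)
      (fun x => x ^ 2) (by fun_prop)
    exact h.trans hsq11
  have hσ2 : (0:ℝ) ≤ σ ^ 2 := sq_nonneg σ
  have htrunc : Tendsto (fun K : ℕ => ∫ ω, min (Y 1 1 ω ^ 2) K ∂P) atTop (𝓝 (σ ^ 2)) := by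
    have h := NBMV.trunc_integral_tendsto (P := P) (hYmeas 1 1) hL2_11.integrable_sq
    rwa [hsq11] at h
  have hs₁0 : (0:ℝ) < s₁ := lt_trans (by norm_num) hs₁.1
  have hs₂0 : (0:ℝ) < s₂ := lt_trans (by norm_num) hs₂.1
  have hlen₁ := NBMV.blkLen_tendsto hs₁0
  have hlen₂ := NBMV.blkLen_tendsto hs₂0
  have hcnt₁ := NBMV.blkCnt_tendsto hs₁0 hs₁.2
  have hcnt₂ := NBMV.blkCnt_tendsto hs₂0 hs₂.2
  -- the second (scaled) statement
  have hsecond : TendstoInProb P (atTop ×ˢ atTop)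
      (fun nm ω =>
        (blkLen s₁ nm.1 : ℝ) * (blkLen s₂ nm.2 : ℝ) *
          ((1 / ((blkCnt s₁ nm.1 : ℝ) * (blkCnt s₂ nm.2 : ℝ))) *
            ∑ h ∈ Finset.Icc 1 (blkCnt s₁ nm.1), ∑ k ∈ Finset.Icc 1 (blkCnt s₂ nm.2),
              (blkMean (blkLen s₁ nm.1) (blkLen s₂ nm.2) h k (fun i j => Y i j ω)
                - noiseBlkAvg s₁ s₂ Y nm ω) ^ 2))
      (σ ^ 2) := by
    intro ε hε
    rw [ENNReal.tendsto_nhds_zero]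
    intro η hη
    set r : ℝ := if η = ⊤ then 1 else η.toReal with hrdef
    have hr : 0 < r := by
      rw [hrdef]
      split_ifs with h
      · norm_num
      · exact ENNReal.toReal_pos (ne_of_gt hη) h
    have hror : ENNReal.ofReal r ≤ η := by
      rw [hrdef]
      split_ifs with h
      · rw [h]; exact le_top
      · rw [ENNReal.ofReal_toReal h]
    have hKex : ∀ᶠ K : ℕ in atTop,
        σ ^ 2 - min (ε / 12) (ε * r / 48) < ∫ ω, min (Y 1 1 ω ^ 2) K ∂P := by
      refine htrunc.eventually (eventually_gt_nhds ?_)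
      have : (0:ℝ) < min (ε / 12) (ε * r / 48) := by positivity
      linarith
    obtain ⟨K, hKp⟩ := hKex.exists
    have hδsm : σ ^ 2 - ∫ ω, min (Y 1 1 ω ^ 2) (K : ℝ) ∂P ≤ ε / 12 := by
      have h := min_le_left (ε / 12) (ε * r / 48)
      linarith [hKp]
    have hδsm2 : σ ^ 2 - ∫ ω, min (Y 1 1 ω ^ 2) (K : ℝ) ∂P ≤ ε * r / 48 := by
      have h := min_le_right (ε / 12) (ε * r / 48)
      linarith [hKp]
    obtain ⟨M, hM⟩ := exists_nat_ge (max (4 * (K : ℝ) ^ 2 / ((ε / 6) ^ 2 * r))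
      (max (8 * (σ ^ 2 * σ ^ 2) / ((ε / 3) ^ 2 * r)) (4 * σ ^ 2 / ((ε / 3) * r))))
    have hev1 : ∀ᶠ n : ℕ in atTop, 1 ≤ blkLen s₁ n ∧ max M 1 ≤ blkCnt s₁ n :=
      (hlen₁.eventually_ge_atTop 1).and (hcnt₁.eventually_ge_atTop _)
    have hev2 : ∀ᶠ m : ℕ in atTop, 1 ≤ blkLen s₂ m ∧ 1 ≤ blkCnt s₂ m :=
      (hlen₂.eventually_ge_atTop 1).and (hcnt₂.eventually_ge_atTop 1)
    filter_upwards [hev1.prod_inl atTop, hev2.prod_inr atTop] with nm hc1 hc2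
    obtain ⟨hln1, hbn1⟩ := hc1
    obtain ⟨hlm1, hbm1⟩ := hc2
    have hbn1' : 1 ≤ blkCnt s₁ nm.1 := le_trans (le_max_right M 1) hbn1
    have hbnM : (M : ℝ) ≤ (blkCnt s₁ nm.1 : ℝ) := by
      exact_mod_cast le_trans (le_max_left M 1) hbn1
    have hbm1R : (1 : ℝ) ≤ (blkCnt s₂ nm.2 : ℝ) := by exact_mod_cast hbm1
    have hbnR : (0 : ℝ) ≤ (blkCnt s₁ nm.1 : ℝ) := Nat.cast_nonneg _
    have hBge : max (4 * (K : ℝ) ^ 2 / ((ε / 6) ^ 2 * r))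
        (max (8 * (σ ^ 2 * σ ^ 2) / ((ε / 3) ^ 2 * r)) (4 * σ ^ 2 / ((ε / 3) * r)))
        ≤ (blkCnt s₁ nm.1 : ℝ) * (blkCnt s₂ nm.2 : ℝ) := by
      refine le_trans hM ?_
      nlinarith [hbnM, hbm1R, hbnR, (Nat.cast_nonneg M : (0:ℝ) ≤ (M:ℝ))]
    set B : ℝ := (blkCnt s₁ nm.1 : ℝ) * (blkCnt s₂ nm.2 : ℝ) with hBdef
    have hBpos : 0 < B := by
      have h1 : (0:ℝ) < (blkCnt s₁ nm.1 : ℝ) := by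
        exact_mod_cast Nat.lt_of_lt_of_le Nat.zero_lt_one hbn1'
      have h2' : (0:ℝ) < (blkCnt s₂ nm.2 : ℝ) := by
        exact_mod_cast Nat.lt_of_lt_of_le Nat.zero_lt_one hbm1
      exact mul_pos h1 h2'
    have hC1 : 4 * (K : ℝ) ^ 2 / ((ε / 6) ^ 2 * r) ≤ B := le_trans (le_max_left _ _) hBge
    have hC3 : 8 * (σ ^ 2 * σ ^ 2) / ((ε / 3) ^ 2 * r) ≤ B :=
      le_trans (le_trans (le_max_left _ _) (le_max_right _ _)) hBge
    have hC4 : 4 * σ ^ 2 / ((ε / 3) * r) ≤ B :=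
      le_trans (le_trans (le_max_right _ _) (le_max_right _ _)) hBge
    refine le_trans (NBMV.main_bound hind hm hL2 h0 h2 hidf hσ2 (Nat.cast_nonneg K) hε hδsm
      (blkLen s₁ nm.1) (blkLen s₂ nm.2) (blkCnt s₁ nm.1) (blkCnt s₂ nm.2)
      hln1 hlm1 hbn1' hbm1) ?_
    have ht1 : (K : ℝ) ^ 2 / (B * (ε / 6) ^ 2) ≤ r / 4 := by
      rw [div_le_iff₀ (by positivity)]
      have h' := (div_le_iff₀ (show (0:ℝ) < (ε / 6) ^ 2 * r by positivity)).1 hC1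
      nlinarith
    have ht2 : (σ ^ 2 - ∫ ω, min (Y 1 1 ω ^ 2) (K : ℝ) ∂P) / (ε / 12) ≤ r / 4 := by
      rw [div_le_iff₀ (by positivity)]
      nlinarith [hδsm2]
    have ht3 : (2 * σ ^ 2 * σ ^ 2 / B) / (ε / 3) ^ 2 ≤ r / 4 := by
      rw [div_div, div_le_iff₀ (by positivity)]
      have h' := (div_le_iff₀ (show (0:ℝ) < (ε / 3) ^ 2 * r by positivity)).1 hC3
      nlinarith
    have ht4 : (σ ^ 2 / B) / (ε / 3) ≤ r / 4 := by
      rw [div_div, div_le_iff₀ (by positivity)]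
      have h' := (div_le_iff₀ (show (0:ℝ) < (ε / 3) * r by positivity)).1 hC4
      nlinarith
    calc ENNReal.ofReal ((K : ℝ) ^ 2 / (B * (ε / 6) ^ 2))
        + ENNReal.ofReal ((σ ^ 2 - ∫ ω, min (Y 1 1 ω ^ 2) (K : ℝ) ∂P) / (ε / 12))
        + ENNReal.ofReal ((2 * σ ^ 2 * σ ^ 2 / B) / (ε / 3) ^ 2)
        + ENNReal.ofReal ((σ ^ 2 / B) / (ε / 3))
        ≤ ENNReal.ofReal (r / 4) + ENNReal.ofReal (r / 4) + ENNReal.ofReal (r / 4)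
          + ENNReal.ofReal (r / 4) := by
          gcongr
          all_goals first
          | exact ht1
          | exact ht2
          | exact ht3
          | exact ht4
      _ = ENNReal.ofReal r := by
          rw [← ENNReal.ofReal_add (by positivity) (by positivity),
            ← ENNReal.ofReal_add (by positivity) (by positivity),
            ← ENNReal.ofReal_add (by positivity) (by positivity)]
          congr 1
          ring
      _ ≤ η := hror
  refine ⟨?_, hsecond⟩
  -- the first statement follows from the second
  intro ε hε
  have h1 := hsecond 1 one_pos
  obtain ⟨N, hN⟩ := exists_nat_ge ((σ ^ 2 + 1) / ε)
  have hev : ∀ᶠ nm : ℕ × ℕ in atTop ×ˢ atTop,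
      (σ ^ 2 + 1) / ε ≤ (blkLen s₁ nm.1 : ℝ) * (blkLen s₂ nm.2 : ℝ) := by
    filter_upwards [(hlen₁.eventually_ge_atTop N).prod_inl atTop,
      (hlen₂.eventually_ge_atTop 1).prod_inr atTop] with nm ha hb
    have ha' : (N : ℝ) ≤ (blkLen s₁ nm.1 : ℝ) := by exact_mod_cast ha
    have hb' : (1 : ℝ) ≤ (blkLen s₂ nm.2 : ℝ) := by exact_mod_cast hb
    calc (σ ^ 2 + 1) / ε ≤ (N : ℝ) := hN
      _ ≤ (blkLen s₁ nm.1 : ℝ) * (blkLen s₂ nm.2 : ℝ) := by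
          nlinarith [(Nat.cast_nonneg (blkLen s₁ nm.1) : (0:ℝ) ≤ (blkLen s₁ nm.1 : ℝ)), (Nat.cast_nonneg N : (0:ℝ) ≤ (N:ℝ))]
  apply tendsto_of_tendsto_of_tendsto_of_le_of_le' (tendsto_const_nhds (x := (0 : ENNReal))) h1
  · exact Filter.Eventually.of_forall fun nm => zero_le
  · filter_upwards [hev] with nm hnm
    apply measure_mono
    intro ω hω
    simp only [Set.mem_setOf_eq] at hω ⊢
    set A : ℝ := (1 / ((blkCnt s₁ nm.1 : ℝ) * (blkCnt s₂ nm.2 : ℝ))) *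
      ∑ h ∈ Finset.Icc 1 (blkCnt s₁ nm.1), ∑ k ∈ Finset.Icc 1 (blkCnt s₂ nm.2),
        (blkMean (blkLen s₁ nm.1) (blkLen s₂ nm.2) h k (fun i j => Y i j ω)
          - noiseBlkAvg s₁ s₂ Y nm ω) ^ 2 with hAdef
    set Lr : ℝ := (blkLen s₁ nm.1 : ℝ) * (blkLen s₂ nm.2 : ℝ) with hLrdef
    rw [sub_zero] at hω
    have hLpos : 0 < Lr := by
      have : (0:ℝ) < (σ ^ 2 + 1) / ε := by positivity
      linarith [hnm]
    have habs : |Lr * A| = Lr * |A| := by rw [abs_mul, abs_of_nonneg hLpos.le]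
    have hLe : σ ^ 2 + 1 ≤ Lr * ε := by
      rw [div_le_iff₀ hε] at hnm
      linarith
    have h2' : σ ^ 2 + 1 ≤ Lr * |A| := by
      calc σ ^ 2 + 1 ≤ Lr * ε := hLe
        _ ≤ Lr * |A| := mul_le_mul_of_nonneg_left hω hLpos.le
    have h3 := abs_sub_abs_le_abs_sub (Lr * A) (σ ^ 2)
    rw [habs, abs_of_nonneg hσ2] at h3
    linarith
end
end
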